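/- arXiv:2212.00224 — 7 statements merged into one kernel-verified Lean document; each statement's English description precedes it below -/
import Mathlib

section
/- Let (n,m,ν,μ) and (n',m',ν',μ') be two distinct admissible quadruples. Then the interior toroidal harmonics I_{n,m}^{ν,μ}(η,θ,φ) = √(cosh η − cos θ) · (Q_{n−1/2}^m(cosh η)/q_{n,m}) · Φ_n^ν(θ) Φ_m^μ(φ) and I_{n',m'}^{ν',μ'} are orthogonal in the weighted L² space over the interior toroidal domain: ∫_{η₀}^{∞} ∫_{−π}^{π} ∫_{−π}^{π} I_{n,m}^{ν,μ}(η,θ,φ) · I_{n',m'}^{ν',μ'}(η,θ,φ) · w(η,θ) · J(η,θ) dφ dθ dη = 0, where w(η,θ) = (cosh η − cos θ)²/sinh η is the weight and J(η,θ) = sinh η/(cosh η − cos θ)³ is the Euclidean volume element of toroidal coordinates. -/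
open Real MeasureTheory intervalIntegral Filter Topology

/-- Associated Legendre function of the second kind of half-integer degree,
`Q_{n-1/2}^m(t)`, defined via its real integral representation (valid for `t > 1`). -/
noncomputable def Qh (n m : ℕ) (t : ℝ) : ℝ :=
  ((-1 : ℝ) ^ m / (2 : ℝ) ^ ((n : ℝ) + 1 / 2)) *
    (Real.Gamma ((n : ℝ) + (m : ℝ) + 1 / 2) / Real.Gamma ((n : ℝ) + 1 / 2)) *
    (t ^ 2 - 1) ^ ((m : ℝ) / 2) *
    ∫ s in (-1 : ℝ)..1, (1 - s ^ 2) ^ ((n : ℝ) - 1 / 2) * (t - s) ^ (-((n : ℝ) + (m : ℝ) + 1 / 2))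

/-- `q_{n,m} = Q_{n-1/2}^m(cosh η₀)`. -/
noncomputable def qh (η₀ : ℝ) (n m : ℕ) : ℝ := Qh n m (Real.cosh η₀)

/-- `Φ_n^{+1}(θ) = cos (n θ)`, `Φ_n^{-1}(θ) = sin (n θ)`. -/
noncomputable def Phi (ν : ℤ) (n : ℤ) (θ : ℝ) : ℝ :=
  if ν = 1 then Real.cos ((n : ℝ) * θ) else Real.sin ((n : ℝ) * θ)

/-- A quadruple `(n, m, ν, μ)` is admissible. -/
def Admissible (n m : ℕ) (ν μ : ℤ) : Prop :=
  (ν = 1 ∨ ν = -1) ∧ (μ = 1 ∨ μ = -1) ∧ ¬(n = 0 ∧ ν = -1) ∧ ¬(m = 0 ∧ μ = -1)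

/-- Toroidal Neumann constant `ρ_{n,m}(η₀)` (`n ≥ 1`). -/
noncomputable def rhoT (η₀ : ℝ) (n m : ℕ) : ℝ :=
  if n = 1 then
    (1 / (2 * Real.sinh η₀)) *
      (Real.cosh η₀ + (2 * (m : ℝ) - 1) * qh η₀ 1 m / qh η₀ 0 m)
  else
    (1 / (4 * Real.sinh η₀)) *
      ((2 * (n : ℝ) - 1) * Real.cosh η₀ +
        (2 * ((m : ℝ) - (n : ℝ)) + 1) * qh η₀ n m / qh η₀ (n - 1) m)

/-- Toroidal Neumann constant `σ_{n,m}(η₀)`. -/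
noncomputable def sigmaT (η₀ : ℝ) (n m : ℕ) : ℝ :=
  (-1 / (2 * Real.sinh η₀)) *
    ((2 * (n : ℝ) * Real.cosh η₀ ^ 2 + 1) +
      (2 * ((m : ℝ) - (n : ℝ)) - 1) * Real.cosh η₀ * qh η₀ (n + 1) m / qh η₀ n m)

/-- Toroidal Neumann constant `τ_{n,m}(η₀)`. -/
noncomputable def tauT (η₀ : ℝ) (n m : ℕ) : ℝ :=
  (1 / (4 * Real.sinh η₀)) *
    ((2 * (n : ℝ) + 3) * Real.cosh η₀ +
      (2 * ((m : ℝ) - (n : ℝ)) - 3) * qh η₀ (n + 2) m / qh η₀ (n + 1) m)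

/-- The normal derivative `N_{n,m}^{ν,μ}(θ,φ)` of the interior toroidal harmonic
`I_{n,m}^{ν,μ}` on the torus `η = η₀`. -/
noncomputable def NDer (η₀ : ℝ) (n m : ℕ) (ν μ : ℤ) (θ φ : ℝ) : ℝ :=
  (Real.sqrt (Real.cosh η₀ - Real.cos θ) / (4 * Real.sinh η₀)) * Phi μ (m : ℤ) φ *
    (Phi ν ((n : ℤ) - 1) θ *
        ((1 + 2 * (n : ℝ)) * Real.cosh η₀ -
          (2 * ((n : ℝ) - (m : ℝ)) + 1) * qh η₀ (n + 1) m / qh η₀ n m) -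
      2 * Phi ν (n : ℤ) θ *
        ((2 * (n : ℝ) * Real.cosh η₀ ^ 2 + 1) -
          (2 * ((n : ℝ) - (m : ℝ)) + 1) * Real.cosh η₀ * qh η₀ (n + 1) m / qh η₀ n m) +
      Phi ν ((n : ℤ) + 1) θ *
        ((1 + 2 * (n : ℝ)) * Real.cosh η₀ -
          (2 * ((n : ℝ) - (m : ℝ)) + 1) * qh η₀ (n + 1) m / qh η₀ n m))

/-- Interior toroidal harmonic `I_{n,m}^{ν,μ}[η₀]` in toroidal coordinates. -/
noncomputable def Ih (η₀ : ℝ) (n m : ℕ) (ν μ : ℤ) (η θ φ : ℝ) : ℝ :=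
  Real.sqrt (Real.cosh η - Real.cos θ) *
    (Qh n m (Real.cosh η) / Qh n m (Real.cosh η₀)) * Phi ν (n : ℤ) θ * Phi μ (m : ℤ) φ


lemma int_cos_zero' (c : ℝ) (h : c ≠ 0) (hc : Real.sin (c * π) = 0) :
    ∫ θ in (-π)..π, Real.cos (c * θ) = 0 := by
  rw [intervalIntegral.integral_comp_mul_left (fun x => Real.cos x) h, integral_cos]
  have : Real.sin (c * -π) = 0 := by
    rw [mul_neg, Real.sin_neg, hc, neg_zero]
  rw [this, hc]
  simp

lemma int_sin_zero' (c : ℝ) : ∫ θ in (-π)..π, Real.sin (c * θ) = 0 := by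
  by_cases h : c = 0
  · simp [h]
  · rw [intervalIntegral.integral_comp_mul_left (fun x => Real.sin x) h, integral_sin]
    rw [mul_neg, Real.cos_neg]
    simp

lemma int_cos_int' (k : ℤ) (hk : k ≠ 0) :
    ∫ θ in (-π)..π, Real.cos ((k : ℝ) * θ) = 0 :=
  int_cos_zero' _ (Int.cast_ne_zero.mpr hk) (Real.sin_int_mul_pi k)

lemma ii_cos (c : ℝ) : IntervalIntegrable (fun θ => Real.cos (c * θ)) MeasureTheory.volume (-π) π :=
  (Real.continuous_cos.comp (continuous_const.mul continuous_id)).intervalIntegrable _ _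

lemma ii_sin (c : ℝ) : IntervalIntegrable (fun θ => Real.sin (c * θ)) MeasureTheory.volume (-π) π :=
  (Real.continuous_sin.comp (continuous_const.mul continuous_id)).intervalIntegrable _ _

lemma phi_orth (a b : ℕ) (α β : ℤ) (hα : α = 1 ∨ α = -1) (hβ : β = 1 ∨ β = -1)
    (ha : ¬(a = 0 ∧ α = -1)) (hb : ¬(b = 0 ∧ β = -1)) (hne : (a, α) ≠ (b, β)) :
    ∫ θ in (-π)..π, Phi α a θ * Phi β b θ = 0 := by
  have hsum : (a : ℤ) ≠ b → ((a : ℤ) + b ≠ 0 ∧ (a : ℤ) - b ≠ 0) := by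
    intro hab
    constructor
    · intro hcon
      have ha0 : a = 0 := by omega
      have hb0 : b = 0 := by omega
      exact hab (by omega)
    · omega
  rcases hα with rfl | rfl <;> rcases hβ with rfl | rfl
  · -- cos · cos
    have hab : (a : ℤ) ≠ b := by
      intro hcon
      have hab2 : a = b := by exact_mod_cast hcon
      exact hne (by simp [hab2])
    obtain ⟨h1, h2⟩ := hsum hab
    have key : ∀ θ : ℝ, Phi 1 a θ * Phi 1 b θ =
        (Real.cos ((((a : ℤ) - b : ℤ) : ℝ) * θ) + Real.cos ((((a : ℤ) + b : ℤ) : ℝ) * θ)) / 2 := by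
      intro θ
      simp only [Phi]
      push_cast
      rw [sub_mul, add_mul, Real.cos_sub, Real.cos_add]
      ring
    simp_rw [key]
    rw [intervalIntegral.integral_div, intervalIntegral.integral_add (ii_cos _) (ii_cos _),
      int_cos_int' _ h2, int_cos_int' _ h1]
    norm_num
  · -- cos · sin
    have key : ∀ θ : ℝ, Phi 1 a θ * Phi (-1) b θ =
        (Real.sin (((a : ℝ) + b) * θ) - Real.sin (((a : ℝ) - b) * θ)) / 2 := by
      intro θ
      simp only [Phi]
      norm_num
      rw [add_mul, sub_mul, Real.sin_add, Real.sin_sub]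
      ring
    simp_rw [key]
    rw [intervalIntegral.integral_div, intervalIntegral.integral_sub (ii_sin _) (ii_sin _),
      int_sin_zero', int_sin_zero']
    norm_num
  · -- sin · cos
    have key : ∀ θ : ℝ, Phi (-1) a θ * Phi 1 b θ =
        (Real.sin (((a : ℝ) + b) * θ) + Real.sin (((a : ℝ) - b) * θ)) / 2 := by
      intro θ
      simp only [Phi]
      norm_num
      rw [add_mul, sub_mul, Real.sin_add, Real.sin_sub]
      ring
    simp_rw [key]
    rw [intervalIntegral.integral_div, intervalIntegral.integral_add (ii_sin _) (ii_sin _),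
      int_sin_zero', int_sin_zero']
    norm_num
  · -- sin · sin
    have hab : (a : ℤ) ≠ b := by
      intro hcon
      have hab2 : a = b := by exact_mod_cast hcon
      exact hne (by simp [hab2])
    obtain ⟨h1, h2⟩ := hsum hab
    have key : ∀ θ : ℝ, Phi (-1) a θ * Phi (-1) b θ =
        (Real.cos ((((a : ℤ) - b : ℤ) : ℝ) * θ) - Real.cos ((((a : ℤ) + b : ℤ) : ℝ) * θ)) / 2 := by
      intro θ
      simp only [Phi]
      norm_num
      push_cast
      rw [sub_mul, add_mul, Real.cos_sub, Real.cos_add]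
      ring
    simp_rw [key]
    rw [intervalIntegral.integral_div, intervalIntegral.integral_sub (ii_cos _) (ii_cos _),
      int_cos_int' _ h2, int_cos_int' _ h1]
    norm_num

lemma Ih_product_simp (η₀ : ℝ) (hη₀ : 0 < η₀) (n m n' m' : ℕ) (ν μ ν' μ' : ℤ) (η θ φ : ℝ)
    (hη : η₀ < η) :
    Ih η₀ n m ν μ η θ φ * Ih η₀ n' m' ν' μ' η θ φ *
        ((Real.cosh η - Real.cos θ) ^ 2 / Real.sinh η) *
        (Real.sinh η / (Real.cosh η - Real.cos θ) ^ 3) =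
      ((Qh n m (Real.cosh η) / Qh n m (Real.cosh η₀)) *
        (Qh n' m' (Real.cosh η) / Qh n' m' (Real.cosh η₀)) *
        (Phi ν n θ * Phi ν' n' θ)) * (Phi μ m φ * Phi μ' m' φ) := by
  have hηpos : (0:ℝ) < η := lt_trans hη₀ hη
  have hs : Real.sinh η ≠ 0 := ne_of_gt (Real.sinh_pos_iff.mpr hηpos)
  have hc : (0:ℝ) < Real.cosh η - Real.cos θ := by
    have h1 : Real.cos θ ≤ 1 := Real.cos_le_one θ
    have h2 : 1 < Real.cosh η := by rw [Real.one_lt_cosh]; exact ne_of_gt hηpos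
    linarith
  have hss : Real.sqrt (Real.cosh η - Real.cos θ) * Real.sqrt (Real.cosh η - Real.cos θ)
      = Real.cosh η - Real.cos θ := Real.mul_self_sqrt hc.le
  have h1 : (Real.cosh η - Real.cos θ) ^ 2 / Real.sinh η *
      (Real.sinh η / (Real.cosh η - Real.cos θ) ^ 3) = (Real.cosh η - Real.cos θ)⁻¹ := by
    field_simp
  rw [mul_assoc, h1]
  unfold Ih
  rw [show Real.sqrt (Real.cosh η - Real.cos θ) *
        (Qh n m (Real.cosh η) / Qh n m (Real.cosh η₀)) * Phi ν (n : ℤ) θ * Phi μ (m : ℤ) φ *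
      (Real.sqrt (Real.cosh η - Real.cos θ) *
        (Qh n' m' (Real.cosh η) / Qh n' m' (Real.cosh η₀)) * Phi ν' (n' : ℤ) θ *
          Phi μ' (m' : ℤ) φ) =
      Real.sqrt (Real.cosh η - Real.cos θ) * Real.sqrt (Real.cosh η - Real.cos θ) *
        ((Qh n m (Real.cosh η) / Qh n m (Real.cosh η₀)) *
          (Qh n' m' (Real.cosh η) / Qh n' m' (Real.cosh η₀)) *
          (Phi ν (n : ℤ) θ * Phi ν' (n' : ℤ) θ) *
          (Phi μ (m : ℤ) φ * Phi μ' (m' : ℤ) φ)) from by ring, hss]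
  rw [mul_comm (Real.cosh η - Real.cos θ), mul_assoc, mul_inv_cancel₀ hc.ne', mul_one]


/-- orthogonality of interior toroidal harmonics in weighted `L²`. -/
theorem toroidal_harmonics_orthogonal (η₀ : ℝ) (hη₀ : 0 < η₀)
    (n m n' m' : ℕ) (ν μ ν' μ' : ℤ)
    (h : Admissible n m ν μ) (h' : Admissible n' m' ν' μ')
    (hne : (n, m, ν, μ) ≠ (n', m', ν', μ')) :
    ∫ η in Set.Ioi η₀, ∫ θ in (-π)..π, ∫ φ in (-π)..π,
        Ih η₀ n m ν μ η θ φ * Ih η₀ n' m' ν' μ' η θ φ *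
          ((Real.cosh η - Real.cos θ) ^ 2 / Real.sinh η) *
          (Real.sinh η / (Real.cosh η - Real.cos θ) ^ 3) = 0 := by
  obtain ⟨hν, hμ, hnν, hmμ⟩ := h
  obtain ⟨hν', hμ', hnν', hmμ'⟩ := h'
  have key : Set.EqOn (fun η => ∫ θ in (-π)..π, ∫ φ in (-π)..π,
      Ih η₀ n m ν μ η θ φ * Ih η₀ n' m' ν' μ' η θ φ *
        ((Real.cosh η - Real.cos θ) ^ 2 / Real.sinh η) *
        (Real.sinh η / (Real.cosh η - Real.cos θ) ^ 3)) 0 (Set.Ioi η₀) := by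
    intro η hη
    simp only [Pi.zero_apply]
    have hpt : ∀ θ φ : ℝ, Ih η₀ n m ν μ η θ φ * Ih η₀ n' m' ν' μ' η θ φ *
        ((Real.cosh η - Real.cos θ) ^ 2 / Real.sinh η) *
        (Real.sinh η / (Real.cosh η - Real.cos θ) ^ 3) =
        ((Qh n m (Real.cosh η) / Qh n m (Real.cosh η₀)) *
          (Qh n' m' (Real.cosh η) / Qh n' m' (Real.cosh η₀)) *
          (Phi ν n θ * Phi ν' n' θ)) * (Phi μ m φ * Phi μ' m' φ) := fun θ φ =>
      Ih_product_simp η₀ hη₀ n m n' m' ν μ ν' μ' η θ φ hη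
    simp_rw [hpt, intervalIntegral.integral_const_mul, intervalIntegral.integral_mul_const,
      intervalIntegral.integral_const_mul]
    by_cases hm2 : (m, μ) = (m', μ')
    · have hn2 : (n, ν) ≠ (n', ν') := by
        intro hc2
        rw [Prod.mk.injEq] at hm2 hc2
        exact hne (by simp [hm2.1, hm2.2, hc2.1, hc2.2])
      rw [phi_orth n n' ν ν' hν hν' hnν hnν' hn2]
      ring
    · rw [phi_orth m m' μ μ' hμ hμ' hmμ hmμ' hm2]
      ring
  rw [MeasureTheory.setIntegral_congr_fun measurableSet_Ioi key]
  simp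
end

section
/- For every admissible quadruple (n,m,ν,μ), the squared weighted L² norm of the interior toroidal harmonic I_{n,m}^{ν,μ}(η,θ,φ) = √(cosh η − cos θ) · (Q_{n−1/2}^m(cosh η)/q_{n,m}) · Φ_n^ν(θ) Φ_m^μ(φ) over the interior toroidal domain is finite and equals ∫_{η₀}^{∞} ∫_{−π}^{π} ∫_{−π}^{π} (I_{n,m}^{ν,μ})² · w · J dφ dθ dη = π² (1+δ_{n,0}) (1+δ_{m,0}) ∫_{η₀}^{∞} ( Q_{n−1/2}^m(cosh η)/q_{n,m} )² dη, where w(η,θ) = (cosh η − cos θ)²/sinh η, J(η,θ) = sinh η/(cosh η − cos θ)³, and δ is the Kronecker delta. -/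
open Real MeasureTheory intervalIntegral Filter Topology

/-! The weight `w` and the Jacobian `J` cancel the factor `cosh η - cos θ` of `I²`, so the
integrand separates as `(Q(cosh η) / q)² · Φ_n(θ)² · Φ_m(φ)²`, and Fubini turns the norm into
the product of the two trigonometric integrals `π (1 + δ)` with the radial integral. The radial
integral converges because the integral representation gives `Q_{n-1/2}^m(t) = O(t^{-(n+1/2)})`,
so its integrand is `O(e^{-η})`. -/

section LegendreIntegral

variable {c p t : ℝ}

lemma intervalIntegrable_one_sub_sq_rpow (hc : -1 < c) :
    IntervalIntegrable (fun s : ℝ => (1 - s ^ 2) ^ c) volume (-1) 1 := by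
  -- on `[0, 1]`, `(1 - s ^ 2) ^ c = (1 - s) ^ c (1 + s) ^ c` with a continuous second factor;
  -- `[-1, 0]` follows by `s ↦ -s`
  have h01 : IntervalIntegrable (fun s : ℝ => (1 - s ^ 2) ^ c) volume 0 1 := by
    have hsing : IntervalIntegrable (fun s : ℝ => (1 - s) ^ c) volume 0 1 := by
      simpa using
        ((intervalIntegral.intervalIntegrable_rpow' hc (a := 0) (b := 1)).comp_sub_left 1).symm
    have hcont : ContinuousOn (fun s : ℝ => (1 + s) ^ c) (Set.uIcc 0 1) := by
      refine ContinuousOn.rpow_const (by fun_prop) fun s hs => Or.inl ?_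
      rw [Set.uIcc_of_le zero_le_one] at hs
      linarith [hs.1]
    refine (hsing.mul_continuousOn hcont).congr fun s hs => ?_
    rw [Set.uIoc_of_le zero_le_one] at hs
    rw [← Real.mul_rpow (by linarith [hs.2]) (by linarith [hs.1])]
    ring_nf
  have h10 : IntervalIntegrable (fun s : ℝ => (1 - s ^ 2) ^ c) volume (-1) 0 := by
    simpa using (h01.comp_sub_left 0).symm
  exact h10.trans h01

lemma intervalIntegrable_one_sub_sq_rpow_mul_sub_rpow (hc : -1 < c) (ht : 1 < t) :
    IntervalIntegrable (fun s : ℝ => (1 - s ^ 2) ^ c * (t - s) ^ (-p)) volume (-1) 1 := by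
  refine (intervalIntegrable_one_sub_sq_rpow hc).mul_continuousOn ?_
  refine ContinuousOn.rpow_const (by fun_prop) fun s hs => Or.inl ?_
  rw [Set.uIcc_of_le (by norm_num)] at hs
  linarith [hs.2]

lemma abs_integral_one_sub_sq_rpow_mul_sub_rpow_le (hc : -1 < c) (hp : 0 ≤ p) (ht : 1 < t) :
    |∫ s in (-1 : ℝ)..1, (1 - s ^ 2) ^ c * (t - s) ^ (-p)| ≤
      (∫ s in (-1 : ℝ)..1, (1 - s ^ 2) ^ c) * (t - 1) ^ (-p) := by
  have hsq : ∀ s ∈ Set.Icc (-1 : ℝ) 1, 0 ≤ 1 - s ^ 2 := fun s hs => by nlinarith [hs.1, hs.2]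
  rw [abs_of_nonneg (intervalIntegral.integral_nonneg (by norm_num) fun s hs =>
      mul_nonneg (Real.rpow_nonneg (hsq s hs) c) (Real.rpow_nonneg (by linarith [hs.2]) _)),
    ← intervalIntegral.integral_mul_const]
  refine intervalIntegral.integral_mono_on (by norm_num)
    (intervalIntegrable_one_sub_sq_rpow_mul_sub_rpow hc ht)
    ((intervalIntegrable_one_sub_sq_rpow hc).mul_const _) fun s hs => ?_
  exact mul_le_mul_of_nonneg_left
    (Real.rpow_le_rpow_of_nonpos (by linarith) (by linarith [hs.2]) (neg_nonpos.mpr hp))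
    (Real.rpow_nonneg (hsq s hs) c)

end LegendreIntegral

lemma abs_Qh_le (n m : ℕ) {t₀ : ℝ} (ht₀ : 1 < t₀) :
    ∃ C, ∀ t, t₀ ≤ t → |Qh n m t| ≤ C * t ^ (-((n : ℝ) + 1 / 2)) := by
  set p : ℝ := n + m + 1 / 2
  have hp : 0 ≤ p := by positivity
  set α : ℝ := 1 - 1 / t₀
  have hα : 0 < α := by
    have : 1 / t₀ < 1 := (div_lt_one (by linarith)).mpr ht₀
    linarith
  set c₀ : ℝ := (-1 : ℝ) ^ m / (2 : ℝ) ^ ((n : ℝ) + 1 / 2) *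
      (Real.Gamma ((n : ℝ) + m + 1 / 2) / Real.Gamma ((n : ℝ) + 1 / 2))
  set B : ℝ := ∫ s in (-1 : ℝ)..1, (1 - s ^ 2) ^ ((n : ℝ) - 1 / 2)
  refine ⟨|c₀| * B * α ^ (-p), fun t ht => ?_⟩
  have ht1 : 1 < t := ht₀.trans_le ht
  have ht0 : 0 < t := by linarith
  have hαt : α * t ≤ t - 1 := by
    have : 1 ≤ t / t₀ := (one_le_div (by linarith)).mpr ht
    have : α * t = t - t / t₀ := by ring
    linarith
  have hpow : (t ^ 2 - 1) ^ ((m : ℝ) / 2) ≤ t ^ (m : ℝ) := calc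
    (t ^ 2 - 1) ^ ((m : ℝ) / 2) ≤ (t ^ (2 : ℝ)) ^ ((m : ℝ) / 2) := by
      rw [Real.rpow_two]
      exact Real.rpow_le_rpow (by nlinarith) (by linarith) (by positivity)
    _ = t ^ (m : ℝ) := by rw [← Real.rpow_mul ht0.le]; ring_nf
  have hint := abs_integral_one_sub_sq_rpow_mul_sub_rpow_le (c := (n : ℝ) - 1 / 2) (p := p)
    (by linarith [n.cast_nonneg (α := ℝ)]) hp ht1
  have hsub : (t - 1) ^ (-p) ≤ α ^ (-p) * t ^ (-p) := by
    rw [← Real.mul_rpow hα.le ht0.le]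
    exact Real.rpow_le_rpow_of_nonpos (by positivity) hαt (neg_nonpos.mpr hp)
  have hexp : t ^ (m : ℝ) * t ^ (-p) = t ^ (-((n : ℝ) + 1 / 2)) := by
    rw [← Real.rpow_add ht0]; congr 1; ring
  have hB : 0 ≤ B :=
    intervalIntegral.integral_nonneg (by norm_num) fun s hs =>
      Real.rpow_nonneg (by nlinarith [hs.1, hs.2]) _
  rw [Qh, abs_mul, abs_mul, abs_of_nonneg (Real.rpow_nonneg (by nlinarith) _), ← hexp]
  calc _ ≤ |c₀| * t ^ (m : ℝ) * (B * (α ^ (-p) * t ^ (-p))) := by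
        gcongr
        exact hint.trans (mul_le_mul_of_nonneg_left hsub hB)
    _ = |c₀| * B * α ^ (-p) * (t ^ (m : ℝ) * t ^ (-p)) := by ring

lemma measurable_Qh (n m : ℕ) : Measurable (Qh n m) := by
  have hJ : Measurable fun t : ℝ => ∫ s in (-1 : ℝ)..1,
      (1 - s ^ 2) ^ ((n : ℝ) - 1 / 2) * (t - s) ^ (-((n : ℝ) + m + 1 / 2)) := by
    simp_rw [intervalIntegral.integral_of_le (show (-1 : ℝ) ≤ 1 by norm_num)]
    exact (((measurable_const.sub (measurable_snd.pow_const 2)).pow_const _).mul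
      ((measurable_fst.sub measurable_snd).pow_const _)).stronglyMeasurable.integral_prod_right'
      |>.measurable
  exact (measurable_const.mul
    ((measurable_id.pow_const 2).sub measurable_const |>.pow_const _)).mul hJ

lemma integrableOn_Qh_cosh_sq (n m : ℕ) {η₀ : ℝ} (hη₀ : 0 < η₀) :
    IntegrableOn (fun η => Qh n m (cosh η) ^ 2) (Set.Ioi η₀) := by
  obtain ⟨C, hC⟩ := abs_Qh_le n m (one_lt_cosh.mpr hη₀.ne')
  have hbound : ∀ η ∈ Set.Ioi η₀, Qh n m (cosh η) ^ 2 ≤ 2 * C ^ 2 * rexp (-1 * η) := by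
    intro η hη
    have hsq : (cosh η ^ (-((n : ℝ) + 1 / 2))) ^ 2 ≤ (cosh η)⁻¹ := by
      rw [← Real.rpow_mul_natCast (by positivity), ← Real.rpow_neg_one]
      exact Real.rpow_le_rpow_of_exponent_le (one_le_cosh η)
        (by push_cast; linarith [n.cast_nonneg (α := ℝ)])
    have hinv : (cosh η)⁻¹ ≤ 2 * rexp (-1 * η) := calc
      (cosh η)⁻¹ ≤ (rexp η / 2)⁻¹ :=
        inv_anti₀ (by positivity) (by rw [cosh_eq]; linarith [exp_pos (-η)])
      _ = 2 * rexp (-1 * η) := by rw [neg_one_mul, exp_neg, inv_div, div_eq_mul_inv]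
    calc Qh n m (cosh η) ^ 2 = |Qh n m (cosh η)| ^ 2 := (sq_abs _).symm
      _ ≤ (C * cosh η ^ (-((n : ℝ) + 1 / 2))) ^ 2 :=
        pow_le_pow_left₀ (abs_nonneg _) (hC _ (cosh_le_cosh.mpr (by
          rw [abs_of_pos hη₀, abs_of_pos (hη₀.trans hη)]; exact le_of_lt hη))) 2
      _ = C ^ 2 * (cosh η ^ (-((n : ℝ) + 1 / 2))) ^ 2 := by ring
      _ ≤ C ^ 2 * (2 * rexp (-1 * η)) := by gcongr; exact hsq.trans hinv
      _ = 2 * C ^ 2 * rexp (-1 * η) := by ring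
  refine Integrable.mono' ((exp_neg_integrableOn_Ioi η₀ one_pos).const_mul (2 * C ^ 2))
    ((measurable_Qh n m).comp continuous_cosh.measurable |>.pow_const 2).aestronglyMeasurable ?_
  refine (ae_restrict_iff' measurableSet_Ioi).mpr (Filter.Eventually.of_forall fun η hη => ?_)
  rw [Real.norm_of_nonneg (sq_nonneg _)]
  exact hbound η hη

lemma continuous_Phi (ν k : ℤ) : Continuous (Phi ν k) := by
  unfold Phi
  split_ifs <;> fun_prop

lemma integral_cos_nat_mul_sq (k : ℕ) :
    ∫ θ in -π..π, cos (k * θ) ^ 2 = π * (1 + if k = 0 then (1 : ℝ) else 0) := by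
  rcases eq_or_ne k 0 with rfl | hk
  · simp only [CharP.cast_eq_zero, zero_mul, cos_zero, one_pow, intervalIntegral.integral_const,
      sub_neg_eq_add, smul_eq_mul, mul_one, ↓reduceIte]
    ring
  · rw [intervalIntegral.integral_comp_mul_left (fun x => cos x ^ 2) (Nat.cast_ne_zero.mpr hk),
      integral_cos_sq, mul_neg, sin_neg, sin_nat_mul_pi, if_neg hk, smul_eq_mul]
    field_simp
    ring

lemma integral_sin_nat_mul_sq {k : ℕ} (hk : k ≠ 0) :
    ∫ θ in -π..π, sin (k * θ) ^ 2 = π := by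
  rw [intervalIntegral.integral_comp_mul_left (fun x => sin x ^ 2) (Nat.cast_ne_zero.mpr hk),
    integral_sin_sq, mul_neg, sin_neg, sin_nat_mul_pi, smul_eq_mul]
  field_simp
  ring

lemma integral_Phi_sq {ν : ℤ} {k : ℕ} (hν : ν = 1 ∨ ν = -1) (hk : ¬(k = 0 ∧ ν = -1)) :
    ∫ θ in -π..π, Phi ν k θ ^ 2 = π * (1 + if k = 0 then (1 : ℝ) else 0) := by
  rcases hν with rfl | rfl
  · simpa [Phi] using integral_cos_nat_mul_sq k
  · have hk : k ≠ 0 := fun h => hk ⟨h, rfl⟩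
    simpa [Phi, hk] using integral_sin_nat_mul_sq hk

lemma Ih_sq_mul_weight_mul_jacobian (η₀ : ℝ) (n m : ℕ) (ν μ : ℤ) {η : ℝ} (hη : 0 < η)
    (θ φ : ℝ) :
    Ih η₀ n m ν μ η θ φ ^ 2 * ((cosh η - cos θ) ^ 2 / sinh η) *
        (sinh η / (cosh η - cos θ) ^ 3) =
      (Qh n m (cosh η) / Qh n m (cosh η₀)) ^ 2 * (Phi ν n θ ^ 2 * Phi μ m φ ^ 2) := by
  have hpos : 0 < cosh η - cos θ := by
    linarith [one_lt_cosh.mpr hη.ne', cos_le_one θ]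
  have hsinh : 0 < sinh η := sinh_pos_iff.mpr hη
  simp only [Ih, mul_pow, sq_sqrt hpos.le]
  generalize (Qh n m (cosh η) / Qh n m (cosh η₀)) ^ 2 = X
  field_simp

lemma IntegrableOn.mul_prod_mul {f g h : ℝ → ℝ} {s t u : Set ℝ} (hf : IntegrableOn f s)
    (hg : IntegrableOn g t) (hh : IntegrableOn h u) :
    IntegrableOn (fun p : ℝ × ℝ × ℝ => f p.1 * (g p.2.1 * h p.2.2)) (s ×ˢ t ×ˢ u) := by
  rw [IntegrableOn, Measure.volume_eq_prod, ← Measure.prod_restrict, Measure.volume_eq_prod,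
    ← Measure.prod_restrict]
  exact hf.mul_prod (hg.mul_prod hh)

lemma intervalIntegral_integral_const_mul_mul (x : ℝ) (g h : ℝ → ℝ) (a b c d : ℝ) :
    ∫ θ in a..b, ∫ φ in c..d, x * (g θ * h φ) =
      x * ((∫ θ in a..b, g θ) * ∫ φ in c..d, h φ) := by
  simp only [← mul_assoc, intervalIntegral.integral_const_mul, intervalIntegral.integral_mul_const]

/-- squared weighted `L²` norm of an interior toroidal harmonic. -/
theorem toroidal_harmonic_norm (η₀ : ℝ) (hη₀ : 0 < η₀)
    (n m : ℕ) (ν μ : ℤ) (h : Admissible n m ν μ) :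
    MeasureTheory.IntegrableOn
      (fun p : ℝ × ℝ × ℝ =>
        (Ih η₀ n m ν μ p.1 p.2.1 p.2.2) ^ 2 *
          ((Real.cosh p.1 - Real.cos p.2.1) ^ 2 / Real.sinh p.1) *
          (Real.sinh p.1 / (Real.cosh p.1 - Real.cos p.2.1) ^ 3))
      (Set.Ioi η₀ ×ˢ Set.Icc (-π) π ×ˢ Set.Icc (-π) π) ∧
    (∫ η in Set.Ioi η₀, ∫ θ in (-π)..π, ∫ φ in (-π)..π,
        (Ih η₀ n m ν μ η θ φ) ^ 2 *
          ((Real.cosh η - Real.cos θ) ^ 2 / Real.sinh η) *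
          (Real.sinh η / (Real.cosh η - Real.cos θ) ^ 3)) =
      π ^ 2 * (1 + if n = 0 then (1 : ℝ) else 0) * (1 + if m = 0 then (1 : ℝ) else 0) *
        ∫ η in Set.Ioi η₀, (Qh n m (Real.cosh η) / Qh n m (Real.cosh η₀)) ^ 2 := by
  obtain ⟨hν, hμ, hnν, hmμ⟩ := h
  have hQ : IntegrableOn (fun η => (Qh n m (cosh η) / Qh n m (cosh η₀)) ^ 2) (Set.Ioi η₀) := by
    simp_rw [div_pow]
    exact (integrableOn_Qh_cosh_sq n m hη₀).div_const _
  constructor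
  · exact (IntegrableOn.mul_prod_mul hQ ((continuous_Phi ν n).pow 2).integrableOn_Icc
      ((continuous_Phi μ m).pow 2).integrableOn_Icc).congr_fun
      (fun p hp => (Ih_sq_mul_weight_mul_jacobian η₀ n m ν μ (hη₀.trans hp.1) _ _).symm)
      (measurableSet_Ioi.prod (measurableSet_Icc.prod measurableSet_Icc))
  · rw [← MeasureTheory.integral_const_mul]
    refine setIntegral_congr_fun measurableSet_Ioi fun η hη => ?_
    simp only [Ih_sq_mul_weight_mul_jacobian η₀ n m ν μ (hη₀.trans hη),
      intervalIntegral_integral_const_mul_mul, integral_Phi_sq hν hnν, integral_Phi_sq hμ hmμ]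
    ring
end

section
/- For every η₀ > 0, the linear span of the family of functions (θ,φ) ↦ √(cosh η₀ − cos θ) · Φ_n^ν(θ) Φ_m^μ(φ), indexed by all admissible quadruples (n,m,ν,μ), is dense in L² of the square (−π,π) × (−π,π) with Lebesgue measure. (Completeness of the boundary restrictions of the interior toroidal harmonics.) -/
open Real MeasureTheory intervalIntegral Filter Topology

/-!
On the square the weight `√(cosh η₀ - cos θ)` lies between the positive constants
`√(cosh η₀ - 1)` and `√(cosh η₀ + 1)`, so multiplying by it preserves density in `L²`, and it
suffices that the products `Φ_n^ν(θ) Φ_m^μ(φ)` span a dense subspace. The square is a fundamental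
domain of the torus `(ℝ ⧸ 2πℤ)²`, on which the exponentials `e^{i(nθ + mφ)}` span a uniformly
dense subalgebra by Stone–Weierstrass, hence a dense subspace of `L²`. Real parts of exponential
sums are real trigonometric polynomials, and `cos (-nθ) = cos nθ`, `sin (-nθ) = -sin nθ`,
`sin 0 = 0` bring these into the span of the admissible products.
-/

open Set
open scoped ENNReal

local notation "𝕋" => AddCircle (2 * π)

local instance : Fact (0 < 2 * π) := ⟨two_pi_pos⟩

theorem MeasureTheory.MemLp.exists_mem_eLpNorm_sub_lt_of_dense {X E : Type*} [TopologicalSpace X]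
    [CompactSpace X] [NormalSpace X] [MeasurableSpace X] [BorelSpace X] [NormedAddCommGroup E]
    [NormedSpace ℝ E] [SecondCountableTopologyEither X E] {μ : Measure X} [IsFiniteMeasure μ]
    [μ.WeaklyRegular] {p : ℝ≥0∞} [Fact (1 ≤ p)] (hp : p ≠ ∞) {S : Set C(X, E)} (hS : Dense S)
    {G : X → E} (hG : MemLp G p μ) {ε : ℝ≥0∞} (hε : ε ≠ 0) :
    ∃ P ∈ S, eLpNorm (G - ⇑P) p μ < ε := by
  have hdense := (ContinuousMap.toLp_denseRange E μ ℝ hp).dense_image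
    (ContinuousMap.toLp p μ ℝ).continuous hS
  obtain ⟨-, ⟨P, hP, rfl⟩, hdist⟩ :=
    EMetric.mem_closure_iff.1 (hdense (hG.toLp G)) ε (pos_iff_ne_zero.2 hε)
  refine ⟨P, hP, ?_⟩
  rwa [Lp.edist_def,
    eLpNorm_congr_ae (hG.coeFn_toLp.sub (ContinuousMap.coeFn_toLp (𝕜 := ℝ) μ P))] at hdist

noncomputable def fourier₂ (n : ℤ × ℤ) : C(𝕋 × 𝕋, ℂ) :=
  (fourier n.1).comp ContinuousMap.fst * (fourier n.2).comp ContinuousMap.snd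

@[simp]
lemma fourier₂_apply (n : ℤ × ℤ) (z : 𝕋 × 𝕋) :
    fourier₂ n z = fourier n.1 z.1 * fourier n.2 z.2 :=
  rfl

noncomputable def fourier₂Subalgebra : StarSubalgebra ℂ C(𝕋 × 𝕋, ℂ) where
  toSubalgebra := Algebra.adjoin ℂ (range fourier₂)
  star_mem' := by
    change Algebra.adjoin ℂ (range fourier₂) ≤ star (Algebra.adjoin ℂ (range fourier₂))
    refine Algebra.adjoin_le ?_
    rintro - ⟨n, rfl⟩
    refine Algebra.subset_adjoin ⟨-n, ?_⟩
    ext z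
    simp

lemma fourier₂Subalgebra_coe :
    Subalgebra.toSubmodule fourier₂Subalgebra.toSubalgebra = Submodule.span ℂ (range fourier₂) := by
  apply Algebra.adjoin_eq_span_of_subset
  refine .trans (fun x ↦ Submonoid.closure_induction (fun _ ↦ id) ⟨0, ?_⟩ ?_) Submodule.subset_span
  · ext z
    simp
  · rintro - - - - ⟨m, rfl⟩ ⟨n, rfl⟩
    refine ⟨m + n, ?_⟩
    ext z
    simp only [fourier₂_apply, ContinuousMap.mul_apply, Prod.fst_add, Prod.snd_add, fourier_add]
    ring

lemma fourier₂Subalgebra_separatesPoints : fourier₂Subalgebra.SeparatesPoints := by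
  rintro ⟨x₁, x₂⟩ ⟨y₁, y₂⟩ hxy
  have fourier_one_ne : ∀ {a b : 𝕋}, a ≠ b → fourier 1 a ≠ fourier 1 b := fun hab h ↦
    hab (AddCircle.injective_toCircle two_pi_pos.ne'
      (Subtype.coe_injective (by simpa [fourier_one] using h)))
  by_cases h₁ : x₁ = y₁
  · refine ⟨_, ⟨fourier₂ (0, 1), Algebra.subset_adjoin ⟨(0, 1), rfl⟩, rfl⟩, ?_⟩
    simpa [fourier_zero] using fourier_one_ne fun h₂ ↦ hxy (by rw [h₁, h₂])
  · refine ⟨_, ⟨fourier₂ (1, 0), Algebra.subset_adjoin ⟨(1, 0), rfl⟩, rfl⟩, ?_⟩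
    simpa [fourier_zero] using fourier_one_ne h₁

lemma dense_span_fourier₂ : Dense (Submodule.span ℂ (range fourier₂) : Set C(𝕋 × 𝕋, ℂ)) := by
  rw [Submodule.dense_iff_topologicalClosure_eq_top, ← fourier₂Subalgebra_coe]
  exact congr_arg (Subalgebra.toSubmodule <| StarSubalgebra.toSubalgebra ·)
    (ContinuousMap.starSubalgebra_topologicalClosure_eq_top_of_separatesPoints _
      fourier₂Subalgebra_separatesPoints)

def trigSpan : Submodule ℝ (ℝ × ℝ → ℝ) :=
  Submodule.span ℝ {h | ∃ n m ν μ, Admissible n m ν μ ∧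
    h = fun x : ℝ × ℝ => Phi ν (n : ℤ) x.1 * Phi μ (m : ℤ) x.2}

lemma Phi_neg (ν n : ℤ) (θ : ℝ) : Phi ν (-n) θ = (if ν = 1 then 1 else -1) * Phi ν n θ := by
  by_cases hν : ν = 1 <;> simp [Phi, hν, neg_mul]

lemma exists_Phi_eq_mul_Phi_natAbs (ν n : ℤ) :
    ∃ s : ℝ, ∀ θ, Phi ν n θ = s * Phi ν (n.natAbs : ℤ) θ := by
  obtain ⟨k, rfl | rfl⟩ := Int.eq_nat_or_neg n
  · exact ⟨1, by simp⟩
  · exact ⟨_, fun θ => by rw [Phi_neg, Int.natAbs_neg, Int.natAbs_natCast]⟩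

lemma Phi_mul_Phi_mem_trigSpan {ν μ : ℤ} (hν : ν = 1 ∨ ν = -1) (hμ : μ = 1 ∨ μ = -1) (n m : ℤ) :
    (fun x : ℝ × ℝ => Phi ν n x.1 * Phi μ m x.2) ∈ trigSpan := by
  by_cases hn : n = 0 ∧ ν = -1
  · obtain ⟨rfl, rfl⟩ := hn
    convert trigSpan.zero_mem
    simp [Phi]
  by_cases hm : m = 0 ∧ μ = -1
  · obtain ⟨rfl, rfl⟩ := hm
    convert trigSpan.zero_mem
    simp [Phi]
  have hadm : Admissible n.natAbs m.natAbs ν μ := ⟨hν, hμ, by simpa using hn, by simpa using hm⟩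
  obtain ⟨s, hs⟩ := exists_Phi_eq_mul_Phi_natAbs ν n
  obtain ⟨t, ht⟩ := exists_Phi_eq_mul_Phi_natAbs μ m
  convert trigSpan.smul_mem (s * t) (Submodule.subset_span ⟨_, _, _, _, hadm, rfl⟩) using 1
  ext x
  simp only [hs, ht, Pi.smul_apply, smul_eq_mul]
  ring

lemma fourier_coe_eq_Phi (n : ℤ) (x : ℝ) :
    fourier n (x : 𝕋) = Phi 1 n x + Phi (-1) n x * Complex.I := by
  have hexp : 2 * π * Complex.I * n * x / (2 * π : ℝ) = ((n * x : ℝ) : ℂ) * Complex.I := by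
    push_cast
    field_simp
  rw [fourier_coe_apply, hexp, Complex.exp_mul_I, ← Complex.ofReal_cos, ← Complex.ofReal_sin]
  simp [Phi]

lemma re_mul_fourier₂_mem_trigSpan (c : ℂ) (n : ℤ × ℤ) :
    (fun x : ℝ × ℝ => (c * fourier₂ n (x.1, x.2)).re) ∈ trigSpan := by
  have h : ∀ {ν μ : ℤ}, (ν = 1 ∨ ν = -1) → (μ = 1 ∨ μ = -1) → _ :=
    fun hν hμ => Phi_mul_Phi_mem_trigSpan hν hμ n.1 n.2
  convert sub_mem
    (sub_mem (trigSpan.smul_mem c.re (h (.inl rfl) (.inl rfl)))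
      (trigSpan.smul_mem c.re (h (.inr rfl) (.inr rfl))))
    (add_mem (trigSpan.smul_mem c.im (h (.inl rfl) (.inr rfl)))
      (trigSpan.smul_mem c.im (h (.inr rfl) (.inl rfl)))) using 1
  ext x
  simp only [fourier₂_apply, fourier_coe_eq_Phi, Complex.mul_re, Complex.mul_im, Complex.add_re,
    Complex.add_im, Complex.ofReal_re, Complex.ofReal_im, Complex.I_re, Complex.I_im, Pi.sub_apply,
    Pi.add_apply, Pi.smul_apply, smul_eq_mul]
  ring

lemma re_mem_trigSpan {P : C(𝕋 × 𝕋, ℂ)} (hP : P ∈ Submodule.span ℂ (range fourier₂)) :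
    (fun x : ℝ × ℝ => (P (x.1, x.2)).re) ∈ trigSpan := by
  suffices ∀ c : ℂ, (fun x : ℝ × ℝ => (c * P (x.1, x.2)).re) ∈ trigSpan by simpa using this 1
  induction hP using Submodule.span_induction with
  | mem _ h =>
    obtain ⟨n, rfl⟩ := h
    exact fun c => re_mul_fourier₂_mem_trigSpan c n
  | zero =>
    intro c
    convert trigSpan.zero_mem
    simp
  | add P Q _ _ hP hQ =>
    intro c
    convert add_mem (hP c) (hQ c) using 1
    ext x
    simp [mul_add]
  | smul a P _ hP =>
    intro c
    simpa [mul_assoc] using hP (c * a)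

lemma measurePreserving_equivIoc_prod :
    MeasurePreserving
      (fun z : 𝕋 × 𝕋 => ((AddCircle.equivIoc (2 * π) (-π) z.1 : ℝ),
        (AddCircle.equivIoc (2 * π) (-π) z.2 : ℝ)))
      volume (volume.restrict (Ioo (-π) π ×ˢ Ioo (-π) π)) := by
  have h : MeasurePreserving (fun x : 𝕋 => (AddCircle.equivIoc (2 * π) (-π) x : ℝ)) volume
      (volume.restrict (Ioo (-π) π)) := by
    rw [Measure.restrict_congr_set Ioo_ae_eq_Ioc]
    convert (measurePreserving_subtype_coe measurableSet_Ioc).comp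
      (AddCircle.measurePreserving_equivIoc (2 * π) (a := -π)) using 2
    · rfl
    · ring_nf
  have := h.prod h
  rwa [Measure.prod_restrict, ← Measure.volume_eq_prod, ← Measure.volume_eq_prod] at this

theorem exists_mem_trigSpan_eLpNorm_sub_lt {p : ℝ≥0∞} [Fact (1 ≤ p)] (hp : p ≠ ∞)
    {g : ℝ × ℝ → ℝ} (hg : MemLp g p (volume.restrict (Ioo (-π) π ×ˢ Ioo (-π) π)))
    {δ : ℝ≥0∞} (hδ : δ ≠ 0) :
    ∃ h ∈ trigSpan, eLpNorm (g - h) p (volume.restrict (Ioo (-π) π ×ˢ Ioo (-π) π)) < δ := by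
  have hρ := measurePreserving_equivIoc_prod
  obtain ⟨P, hP, hlt⟩ := (hg.ofReal.comp_measurePreserving hρ).exists_mem_eLpNorm_sub_lt_of_dense
    hp dense_span_fourier₂ hδ
  refine ⟨_, re_mem_trigSpan hP, lt_of_le_of_lt ?_ hlt⟩
  calc eLpNorm (g - fun x => (P (x.1, x.2)).re) p _
      ≤ eLpNorm (fun x : ℝ × ℝ => (g x : ℂ) - P (x.1, x.2)) p _ :=
        eLpNorm_mono fun x => by simpa using Complex.abs_re_le_norm ((g x : ℂ) - P (x.1, x.2))
    _ = _ := by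
      rw [← eLpNorm_comp_measurePreserving (g := fun x : ℝ × ℝ => (g x : ℂ) - P (x.1, x.2))
        (hg.ofReal.aestronglyMeasurable.sub (by fun_prop)) hρ]
      congr 1
      ext z
      simp

theorem exists_mem_eLpNorm_sub_mul_lt {α : Type*} [MeasurableSpace α] {μ : Measure α}
    {p : ℝ≥0∞} {S : Set (α → ℝ)}
    (hS : ∀ g, MemLp g p μ → ∀ δ : ℝ≥0∞, δ ≠ 0 → ∃ h ∈ S, eLpNorm (g - h) p μ < δ)
    {w : α → ℝ} (hw : AEStronglyMeasurable w μ) {a b : ℝ} (ha : 0 < a) (haw : ∀ x, a ≤ w x)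
    (hwb : ∀ x, w x ≤ b) {f : α → ℝ} (hf : MemLp f p μ) {ε : ℝ≥0∞} (hε : ε ≠ 0) :
    ∃ h ∈ S, eLpNorm (f - w * h) p μ < ε := by
  have hw₀ : ∀ x, 0 < w x := fun x => ha.trans_le (haw x)
  have hfw : MemLp (f / w) p μ := hf.of_le_mul (c := a⁻¹) (hf.aestronglyMeasurable.div₀ hw)
    (.of_forall fun x => by
      rw [Pi.div_apply, norm_div, Real.norm_of_nonneg (hw₀ x).le, div_eq_inv_mul]
      exact mul_le_mul_of_nonneg_right (inv_anti₀ ha (haw x)) (norm_nonneg _))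
  obtain ⟨h, hhS, hlt⟩ := hS _ hfw (ε / ENNReal.ofReal b)
    (ENNReal.div_pos_iff.2 ⟨hε, ENNReal.ofReal_ne_top⟩).ne'
  refine ⟨h, hhS, ?_⟩
  calc eLpNorm (f - w * h) p μ ≤ ENNReal.ofReal b * eLpNorm (f / w - h) p μ := by
        refine eLpNorm_le_mul_eLpNorm_of_ae_le_mul (.of_forall fun x => ?_) p
        have hfx : f x - w x * h x = w x * (f x / w x - h x) := by
          field_simp [(hw₀ x).ne']
        rw [Pi.sub_apply, Pi.mul_apply, hfx, norm_mul, Real.norm_of_nonneg (hw₀ x).le]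
        exact mul_le_mul_of_nonneg_right (hwb x) (norm_nonneg _)
    _ < ε := ENNReal.mul_lt_of_lt_div' hlt

/-- completeness of the boundary restrictions of the interior toroidal
harmonics: their span is dense in `L²((-π,π) × (-π,π))`. -/
theorem boundary_harmonics_dense (η₀ : ℝ) (hη₀ : 0 < η₀)
    (f : ℝ × ℝ → ℝ)
    (hf : MeasureTheory.MemLp f 2
      ((volume : Measure (ℝ × ℝ)).restrict (Set.Ioo (-π) π ×ˢ Set.Ioo (-π) π)))
    (ε : ℝ) (hε : 0 < ε) :
    ∃ (k : ℕ) (c : Fin k → ℝ) (n m : Fin k → ℕ) (ν μ : Fin k → ℤ),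
      (∀ i, Admissible (n i) (m i) (ν i) (μ i)) ∧
      MeasureTheory.eLpNorm
          (fun p : ℝ × ℝ =>
            f p - ∑ i, c i * (Real.sqrt (Real.cosh η₀ - Real.cos p.1) *
              Phi (ν i) ((n i : ℤ)) p.1 * Phi (μ i) ((m i : ℤ)) p.2))
          2 ((volume : Measure (ℝ × ℝ)).restrict (Set.Ioo (-π) π ×ˢ Set.Ioo (-π) π)) <
        ENNReal.ofReal ε := by
  have hcosh : 1 < cosh η₀ := one_lt_cosh.2 hη₀.ne'
  obtain ⟨h, hh, hlt⟩ := exists_mem_eLpNorm_sub_mul_lt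
    (fun g hg δ hδ => exists_mem_trigSpan_eLpNorm_sub_lt (p := 2) ENNReal.ofNat_ne_top hg hδ)
    (w := fun x => √(cosh η₀ - cos x.1)) (by fun_prop) (a := √(cosh η₀ - 1))
    (b := √(cosh η₀ + 1)) (sqrt_pos.2 (by linarith))
    (fun x => sqrt_le_sqrt (by linarith [cos_le_one x.1]))
    (fun x => sqrt_le_sqrt (by linarith [neg_one_le_cos x.1])) hf (ENNReal.ofReal_pos.2 hε).ne'
  obtain ⟨k, c, v, rfl⟩ := Submodule.mem_span_set'.1 hh
  choose n m ν μ hadm hv using fun i => (v i).2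
  refine ⟨k, c, n, m, ν, μ, hadm, lt_of_eq_of_lt ?_ hlt⟩
  congr 1
  ext x
  simp only [Pi.sub_apply, Pi.mul_apply, Finset.sum_apply, Pi.smul_apply, hv, smul_eq_mul,
    Finset.mul_sum]
  exact congrArg _ (Finset.sum_congr rfl fun i _ => by ring)
end

section
/- Fix η₀ > 0, an integer r ≥ 4, a constant C > 0, and reals a_{n,m}^{ν,μ} indexed by admissible quadruples satisfying |a_{n,m}^{ν,μ}| ≤ C/(n+m+1)^r. Let b_{n,m}^{ν,μ} be defined from the a_{n,m}^{ν,μ} by the tridiagonal relations. Then there exists a constant C′ > 0, depending only on C and η₀, such that |b_{n,m}^{ν,μ}| ≤ C′/(n+m+1)^{r−1} for every admissible quadruple (n,m,ν,μ). -/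
/-!
For `t > 1`, `Q_{n-1/2}^m(t) = (-1)^m (t² - 1)^{m/2} Γ(n+m+1/2) / (Γ(n+1/2) 2^{n+1/2}) · J_n` with
`J_n = ∫_{-1}^{1} (1 - s²)^{n-1/2} (t - s)^{-(n+m+1/2)} ds > 0`. Integrating the derivative of
`(1 - s²)^{n+1/2} (t - s)^{-(n+m+1/2)}`, which vanishes at `s = ±1`, gives
`(n+m+1/2) J_{n+1} = (2n+1) ∫ s (1 - s²)^{n-1/2} (t - s)^{-(n+m+1/2)} ds ≤ (2n+1) J_n`,
that is `|q_{n+1,m} / q_{n,m}| ≤ 1`. Hence `|ρ|, |σ|, |τ| ≤ K (n+m+1)` with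
`K = (cosh η₀ + 1)² / sinh η₀`. Each `b_{n,m}` combines `a_{k,m}` with `k ∈ {n-1, n, n+1}`, and
`2 (k+m+1) ≥ n+m+1`, so `|b_{n,m}| ≤ 3 · 2^r K C / (n+m+1)^{r-1}`.
-/

open Real MeasureTheory intervalIntegral Filter Topology
open Set

noncomputable def legendreIntegral (t p q : ℝ) : ℝ :=
  ∫ s in (-1 : ℝ)..1, (1 - s ^ 2) ^ p * (t - s) ^ q

section LegendreIntegral

variable {t : ℝ}

lemma intervalIntegrable_legendreIntegrand (ht : 1 < t) {p : ℝ} (hp : -1 < p) (q : ℝ) :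
    IntervalIntegrable (fun s => (1 - s ^ 2) ^ p * (t - s) ^ q) volume (-1) 1 := by
  -- The singular factor `(1 + s) ^ p`, resp. `(1 - s) ^ p`, is integrable near `-1`, resp. `1`,
  -- and is multiplied there by a function continuous on the closed half-interval.
  have hleft : IntervalIntegrable (fun s => (1 + s) ^ p * ((1 - s) ^ p * (t - s) ^ q))
      volume (-1) 0 := by
    refine IntervalIntegrable.mul_continuousOn ?_ ?_
    · simpa [add_comm] using (intervalIntegrable_rpow' (a := 0) (b := 1) hp).comp_add_right 1
    · refine ContinuousOn.mul ?_ ?_ <;> refine ContinuousOn.rpow_const (by fun_prop) ?_ <;>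
        intro s hs <;> rw [uIcc_of_le (by norm_num)] at hs <;> left <;> linarith [hs.1, hs.2]
  have hright : IntervalIntegrable (fun s => (1 - s) ^ p * ((1 + s) ^ p * (t - s) ^ q))
      volume 0 1 := by
    refine IntervalIntegrable.mul_continuousOn ?_ ?_
    · simpa using (intervalIntegrable_rpow' (a := 1) (b := 0) hp).comp_sub_left 1
    · refine ContinuousOn.mul ?_ ?_ <;> refine ContinuousOn.rpow_const (by fun_prop) ?_ <;>
        intro s hs <;> rw [uIcc_of_le (by norm_num)] at hs <;> left <;> linarith [hs.1, hs.2]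
  have hsplit : ∀ s, -1 ≤ s → s ≤ 1 →
      (1 - s ^ 2) ^ p * (t - s) ^ q = (1 + s) ^ p * ((1 - s) ^ p * (t - s) ^ q) := by
    intro s h₁ h₂
    rw [← mul_assoc, ← Real.mul_rpow (by linarith) (by linarith)]
    ring_nf
  refine (hleft.trans (hright.congr_uIoo fun s hs => ?_)).congr_uIoo fun s hs => ?_
  · rw [uIoo_of_le (by norm_num)] at hs
    dsimp only
    rw [mul_left_comm]
  · rw [uIoo_of_le (by norm_num)] at hs
    exact (hsplit s hs.1.le hs.2.le).symm

lemma legendreIntegral_pos (ht : 1 < t) {p : ℝ} (hp : -1 < p) (q : ℝ) :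
    0 < legendreIntegral t p q :=
  intervalIntegral_pos_of_pos_on (intervalIntegrable_legendreIntegrand ht hp q)
    (fun s hs => mul_pos (Real.rpow_pos_of_pos (by nlinarith [hs.1, hs.2]) _)
      (Real.rpow_pos_of_pos (by linarith [hs.2]) _)) (by norm_num)

/-- Integration by parts against `(1 - s²) ^ a (t - s) ^ b`, which vanishes at `s = ±1`. -/
lemma integral_legendreIntegrand_parts (ht : 1 < t) {a : ℝ} (ha : 0 < a) (b : ℝ) :
    -b * legendreIntegral t a (b - 1) =
      2 * a * ∫ s in (-1 : ℝ)..1, s * ((1 - s ^ 2) ^ (a - 1) * (t - s) ^ b) := by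
  set F : ℝ → ℝ := fun s => (1 - s ^ 2) ^ a * (t - s) ^ b
  have hint₁ : IntervalIntegrable (fun s => s * ((1 - s ^ 2) ^ (a - 1) * (t - s) ^ b))
      volume (-1) 1 :=
    (intervalIntegrable_legendreIntegrand ht (by linarith) b).continuousOn_mul continuousOn_id
  have hint₂ := intervalIntegrable_legendreIntegrand ht (by linarith) (b - 1)
  have hderiv : ∀ s ∈ Ioo (-1 : ℝ) 1, HasDerivAt F
      (-(2 * a) * (s * ((1 - s ^ 2) ^ (a - 1) * (t - s) ^ b)) +
        -b * ((1 - s ^ 2) ^ a * (t - s) ^ (b - 1))) s := by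
    intro s hs
    have h₁ : HasDerivAt (fun s : ℝ => 1 - s ^ 2) (-(2 * s)) s := by
      simpa using (hasDerivAt_pow 2 s).const_sub 1
    have h₂ : HasDerivAt (fun s : ℝ => t - s) (-1) s := by
      simpa using (hasDerivAt_id s).const_sub t
    refine ((h₁.rpow_const (p := a) (Or.inl (by nlinarith [hs.1, hs.2]))).mul
      (h₂.rpow_const (p := b) (Or.inl (by linarith [hs.2])))).congr_deriv ?_
    ring
  have hcont : ContinuousOn F (Icc (-1) 1) :=
    ContinuousOn.mul (ContinuousOn.rpow_const (by fun_prop) fun _ _ => Or.inr ha.le)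
      (ContinuousOn.rpow_const (by fun_prop) fun s hs => Or.inl (by linarith [hs.2]))
  have hFTC := integral_eq_sub_of_hasDeriv_right_of_le (by norm_num) hcont
    (fun s hs => (hderiv s hs).hasDerivWithinAt) ((hint₁.const_mul _).add (hint₂.const_mul _))
  have hF : ∀ s, s ^ 2 = 1 → F s = 0 := fun s hs => by
    simp [F, hs, Real.zero_rpow ha.ne']
  rw [hF 1 (by norm_num), hF (-1) (by norm_num), sub_zero, intervalIntegral.integral_add
    (hint₁.const_mul _) (hint₂.const_mul _), intervalIntegral.integral_const_mul,
    intervalIntegral.integral_const_mul] at hFTC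
  rw [legendreIntegral]
  linarith

lemma neg_mul_legendreIntegral_le (ht : 1 < t) {a : ℝ} (ha : 0 < a) (b : ℝ) :
    -b * legendreIntegral t a (b - 1) ≤ 2 * a * legendreIntegral t (a - 1) b := by
  rw [integral_legendreIntegrand_parts ht ha b, legendreIntegral]
  refine mul_le_mul_of_nonneg_left (intervalIntegral.integral_mono_on (by norm_num)
    ((intervalIntegrable_legendreIntegrand ht (by linarith) b).continuousOn_mul continuousOn_id)
    (intervalIntegrable_legendreIntegrand ht (by linarith) b) fun s hs => ?_) (by linarith)
  exact mul_le_of_le_one_left (mul_nonneg (Real.rpow_nonneg (by nlinarith [hs.1, hs.2]) _)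
    (Real.rpow_nonneg (by linarith [hs.2]) _)) hs.2

end LegendreIntegral

/-- `Qh n m t` stripped of its sign `(-1) ^ m` and of the factor `(t² - 1) ^ (m / 2)`. -/
noncomputable def QhReduced (n m : ℕ) (t : ℝ) : ℝ :=
  Real.Gamma ((n : ℝ) + (m : ℝ) + 1 / 2) / Real.Gamma ((n : ℝ) + 1 / 2) /
    (2 : ℝ) ^ ((n : ℝ) + 1 / 2) *
      legendreIntegral t ((n : ℝ) - 1 / 2) (-((n : ℝ) + (m : ℝ) + 1 / 2))

section QhReduced

variable {t : ℝ} (n m : ℕ)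

lemma Qh_eq_mul_QhReduced :
    Qh n m t = (-1 : ℝ) ^ m * (t ^ 2 - 1) ^ ((m : ℝ) / 2) * QhReduced n m t := by
  rw [Qh, QhReduced, legendreIntegral]
  ring

lemma QhReduced_pos (ht : 1 < t) : 0 < QhReduced n m t := by
  have hn : (0 : ℝ) ≤ n := n.cast_nonneg
  exact mul_pos (div_pos (div_pos (Real.Gamma_pos_of_pos (by positivity))
    (Real.Gamma_pos_of_pos (by positivity))) (by positivity))
    (legendreIntegral_pos ht (by linarith) _)

lemma QhReduced_succ_le (ht : 1 < t) : QhReduced (n + 1) m t ≤ QhReduced n m t := by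
  set a : ℝ := (n : ℝ) + 1 / 2
  set b : ℝ := -((n : ℝ) + (m : ℝ) + 1 / 2)
  have ha : 0 < a := by positivity
  set c := Real.Gamma ((n : ℝ) + (m : ℝ) + 1 / 2) / Real.Gamma a / (2 : ℝ) ^ a
  have hc : 0 < c := div_pos (div_pos (Real.Gamma_pos_of_pos (by positivity))
    (Real.Gamma_pos_of_pos ha)) (by positivity)
  have hsucc : QhReduced (n + 1) m t = c * (-b * legendreIntegral t a (b - 1) / (2 * a)) := by
    have hΓ₁ := Real.Gamma_add_one (s := (n : ℝ) + (m : ℝ) + 1 / 2) (by positivity)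
    have hΓ₂ := Real.Gamma_add_one ha.ne'
    have h₂ := Real.rpow_add_one (two_ne_zero (α := ℝ)) a
    rw [QhReduced, show ((n + 1 : ℕ) : ℝ) + (m : ℝ) + 1 / 2 = (n : ℝ) + (m : ℝ) + 1 / 2 + 1 by
        push_cast; ring, show ((n + 1 : ℕ) : ℝ) + 1 / 2 = a + 1 by push_cast; ring,
      show ((n + 1 : ℕ) : ℝ) - 1 / 2 = a by push_cast; ring,
      show -((n : ℝ) + (m : ℝ) + 1 / 2 + 1) = b - 1 by ring, hΓ₁, hΓ₂, h₂]
    simp only [c, b]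
    field_simp
  have hself : QhReduced n m t = c * legendreIntegral t (a - 1) b := by
    rw [QhReduced, show a - 1 = (n : ℝ) - 1 / 2 by ring]
  rw [hsucc, hself]
  refine mul_le_mul_of_nonneg_left ?_ hc.le
  rw [div_le_iff₀ (by positivity), mul_comm _ (2 * a)]
  exact neg_mul_legendreIntegral_le ht ha b

lemma abs_Qh_succ_div_Qh_le_one (ht : 1 < t) : |Qh (n + 1) m t / Qh n m t| ≤ 1 := by
  have hfactor : (-1 : ℝ) ^ m * (t ^ 2 - 1) ^ ((m : ℝ) / 2) ≠ 0 :=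
    mul_ne_zero (by simp) (Real.rpow_pos_of_pos (by nlinarith) _).ne'
  rw [Qh_eq_mul_QhReduced, Qh_eq_mul_QhReduced, mul_div_mul_left _ _ hfactor,
    abs_of_pos (div_pos (QhReduced_pos _ _ ht) (QhReduced_pos _ _ ht)),
    div_le_one (QhReduced_pos _ _ ht)]
  exact QhReduced_succ_le n m ht

end QhReduced

lemma abs_qh_succ_div_qh_le_one {η₀ : ℝ} (hη₀ : η₀ ≠ 0) (n m : ℕ) :
    |qh η₀ (n + 1) m / qh η₀ n m| ≤ 1 :=
  abs_Qh_succ_div_Qh_le_one n m (Real.one_lt_cosh.mpr hη₀)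

noncomputable def neumannConst (η₀ : ℝ) : ℝ := (Real.cosh η₀ + 1) ^ 2 / Real.sinh η₀

lemma neumannConst_pos {η₀ : ℝ} (hη₀ : 0 < η₀) : 0 < neumannConst η₀ :=
  div_pos (by positivity) (Real.sinh_pos_iff.mpr hη₀)

/-- The common shape `(1 / (c sinh η₀)) (x + y ρ)` of the Neumann constants, with `ρ` a ratio of
consecutive `qh`. -/
lemma abs_div_mul_add_mul_le {η₀ c x y ρ N : ℝ} (hη₀ : 0 < η₀) (hc : 0 < c) (hρ : |ρ| ≤ 1)
    (h : |x| + |y| ≤ c * (Real.cosh η₀ + 1) ^ 2 * N) :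
    |1 / (c * Real.sinh η₀) * (x + y * ρ)| ≤ neumannConst η₀ * N := by
  have hS := Real.sinh_pos_iff.mpr hη₀
  have hxy : |x + y * ρ| ≤ |x| + |y| :=
    (abs_add_le _ _).trans (by rw [abs_mul]; gcongr; exact mul_le_of_le_one_right (abs_nonneg y) hρ)
  rw [abs_mul, abs_of_pos (by positivity), neumannConst, div_mul_eq_mul_div, div_mul_eq_mul_div,
    one_mul, div_le_div_iff₀ (by positivity) hS]
  nlinarith

lemma abs_sigmaT_le {η₀ : ℝ} (hη₀ : 0 < η₀) (n m : ℕ) :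
    |sigmaT η₀ n m| ≤ neumannConst η₀ * ((n : ℝ) + (m : ℝ) + 1) := by
  have hT := Real.one_le_cosh η₀
  have hn : (0 : ℝ) ≤ n := n.cast_nonneg
  have hm : (0 : ℝ) ≤ m := m.cast_nonneg
  have hk : |2 * ((m : ℝ) - n) - 1| ≤ 2 * (n + m) + 1 := abs_le.mpr ⟨by linarith, by linarith⟩
  rw [sigmaT, neg_div, neg_mul, abs_neg, mul_div_assoc]
  refine abs_div_mul_add_mul_le hη₀ two_pos (abs_qh_succ_div_qh_le_one hη₀.ne' n m) ?_
  rw [abs_of_pos (by positivity), abs_mul, abs_of_pos (by positivity : (0 : ℝ) < Real.cosh η₀)]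
  nlinarith [mul_le_mul_of_nonneg_right hk (by positivity : (0 : ℝ) ≤ Real.cosh η₀)]

lemma abs_tauT_le {η₀ : ℝ} (hη₀ : 0 < η₀) (n m : ℕ) :
    |tauT η₀ n m| ≤ neumannConst η₀ * ((n : ℝ) + (m : ℝ) + 1) := by
  have hT := Real.one_le_cosh η₀
  have hn : (0 : ℝ) ≤ n := n.cast_nonneg
  have hm : (0 : ℝ) ≤ m := m.cast_nonneg
  have hk : |2 * ((m : ℝ) - n) - 3| ≤ 2 * (n + m) + 3 := abs_le.mpr ⟨by linarith, by linarith⟩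
  rw [tauT, mul_div_assoc]
  refine abs_div_mul_add_mul_le hη₀ four_pos (abs_qh_succ_div_qh_le_one hη₀.ne' (n + 1) m) ?_
  rw [abs_of_pos (by positivity)]
  nlinarith [mul_nonneg (sq_nonneg (Real.cosh η₀)) (by positivity : (0 : ℝ) ≤ n + m + 1),
    mul_nonneg (by positivity : (0 : ℝ) ≤ Real.cosh η₀)
      (by positivity : (0 : ℝ) ≤ 6 * n + 8 * m + 5)]

lemma abs_rhoT_le {η₀ : ℝ} (hη₀ : 0 < η₀) {n : ℕ} (hn : 1 ≤ n) (m : ℕ) :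
    |rhoT η₀ n m| ≤ neumannConst η₀ * ((n : ℝ) + (m : ℝ) + 1) := by
  have hT := Real.one_le_cosh η₀
  have hm : (0 : ℝ) ≤ m := m.cast_nonneg
  rw [rhoT]
  split_ifs with h1
  · subst h1
    have hj : |2 * (m : ℝ) - 1| ≤ 2 * m + 1 := abs_le.mpr ⟨by linarith, by linarith⟩
    rw [mul_div_assoc]
    refine abs_div_mul_add_mul_le hη₀ two_pos (abs_qh_succ_div_qh_le_one hη₀.ne' 0 m) ?_
    rw [abs_of_pos (by positivity)]
    push_cast
    nlinarith [mul_nonneg (sq_nonneg (Real.cosh η₀)) hm]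
  · obtain ⟨k, rfl⟩ := Nat.exists_eq_add_of_le' hn
    have hk : (0 : ℝ) ≤ k := k.cast_nonneg
    have hj : |2 * ((m : ℝ) - (k + 1)) + 1| ≤ 2 * (k + 1 + m) + 1 :=
      abs_le.mpr ⟨by linarith, by linarith⟩
    rw [mul_div_assoc, Nat.add_sub_cancel]
    refine abs_div_mul_add_mul_le hη₀ four_pos (abs_qh_succ_div_qh_le_one hη₀.ne' k m) ?_
    push_cast
    rw [abs_of_pos (mul_pos (by linarith) (by linarith))]
    nlinarith [mul_nonneg (sq_nonneg (Real.cosh η₀)) (by positivity : (0 : ℝ) ≤ k + m + 2),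
      mul_nonneg (by positivity : (0 : ℝ) ≤ Real.cosh η₀)
        (by positivity : (0 : ℝ) ≤ 6 * k + 8 * m + 11)]

lemma abs_mul_le_of_abs_le_mul_of_abs_le_div_pow {c x K C N M : ℝ} {r : ℕ} (hr : 1 ≤ r)
    (hN : 0 < N) (hNM : N ≤ 2 * M) (hC : 0 ≤ C) (hc : |c| ≤ K * N) (hx : |x| ≤ C / M ^ r) :
    |c * x| ≤ 2 ^ r * K * C / N ^ (r - 1) := by
  have hM : 0 < M := by linarith
  have hK : 0 ≤ K := nonneg_of_mul_nonneg_left ((abs_nonneg c).trans hc) hN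
  have hx' : |x| ≤ 2 ^ r * C / N ^ r := by
    refine hx.trans ?_
    rw [div_le_div_iff₀ (by positivity) (by positivity), mul_comm (2 ^ r) C, mul_assoc, ← mul_pow]
    exact mul_le_mul_of_nonneg_left (pow_le_pow_left₀ hN.le hNM r) hC
  calc |c * x| = |c| * |x| := abs_mul c x
    _ ≤ K * N * (2 ^ r * C / N ^ r) := mul_le_mul hc hx' (abs_nonneg x) (by positivity)
    _ = 2 ^ r * K * C / N ^ (r - 1) := by
      obtain ⟨k, rfl⟩ := Nat.exists_eq_add_of_le' hr
      rw [Nat.add_sub_cancel]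
      field_simp
      ring

namespace Admissible

variable {n m : ℕ} {ν μ : ℤ}

lemma succ (h : Admissible n m ν μ) : Admissible (n + 1) m ν μ :=
  ⟨h.1, h.2.1, by simp, h.2.2.2⟩

lemma pred (h : Admissible n m ν μ) (hn : ¬(n = 0 ∨ (ν = -1 ∧ n = 1))) :
    Admissible (n - 1) m ν μ :=
  ⟨h.1, h.2.1, fun ⟨hn0, hν⟩ => hn (by omega), h.2.2.2⟩

end Admissible

/-- decay of the Neumann coefficients `b` given decay of the Dirichlet
coefficients `a`; the constant depends only on `C` and `η₀`. -/
theorem neumann_coefficient_bound (η₀ : ℝ) (hη₀ : 0 < η₀)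
    (r : ℕ) (hr : 4 ≤ r) (C : ℝ) (hC : 0 < C) :
    ∃ C' > (0 : ℝ), ∀ (a b : ℕ → ℕ → ℤ → ℤ → ℝ),
      (∀ n m ν μ, Admissible n m ν μ →
        |a n m ν μ| ≤ C / ((n : ℝ) + (m : ℝ) + 1) ^ r) →
      (∀ n m ν μ, Admissible n m ν μ →
        b n m ν μ =
          (if n = 0 ∨ (ν = -1 ∧ n = 1) then 0 else rhoT η₀ n m) * a (n - 1) m ν μ +
            sigmaT η₀ n m * a n m ν μ + tauT η₀ n m * a (n + 1) m ν μ) →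
      ∀ n m ν μ, Admissible n m ν μ →
        |b n m ν μ| ≤ C' / ((n : ℝ) + (m : ℝ) + 1) ^ (r - 1) := by
  set K := neumannConst η₀
  have hK := neumannConst_pos hη₀
  refine ⟨3 * (2 ^ r * K * C), by positivity, fun a b ha hb n m ν μ hadm => ?_⟩
  set N : ℝ := (n : ℝ) + (m : ℝ) + 1 with hN
  have hN₀ : 0 < N := by positivity
  set D := 2 ^ r * K * C / N ^ (r - 1)
  have hterm : ∀ c k, |c| ≤ K * N → Admissible k m ν μ → N ≤ 2 * ((k : ℝ) + m + 1) →
      |c * a k m ν μ| ≤ D := fun c k hc hk hNk =>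
    abs_mul_le_of_abs_le_mul_of_abs_le_div_pow (by omega) hN₀ hNk hC.le hc (ha k m ν μ hk)
  have hρ : |(if n = 0 ∨ (ν = -1 ∧ n = 1) then 0 else rhoT η₀ n m) * a (n - 1) m ν μ| ≤ D := by
    split_ifs with h
    · rw [zero_mul, abs_zero]
      positivity
    · have hn : 1 ≤ n := by omega
      refine hterm _ _ (abs_rhoT_le hη₀ hn m) (hadm.pred h) ?_
      rw [Nat.cast_sub hn, Nat.cast_one]
      linarith [(Nat.one_le_cast (α := ℝ)).mpr hn]
  have hσ := hterm _ n (abs_sigmaT_le hη₀ n m) hadm (by linarith)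
  have hτ := hterm _ (n + 1) (abs_tauT_le hη₀ n m) hadm.succ (by push_cast; linarith)
  rw [hb n m ν μ hadm, mul_div_assoc]
  calc _ ≤ _ + _ + _ := (abs_add_le _ _).trans (add_le_add_left (abs_add_le _ _) _)
    _ ≤ 3 * D := by linarith
end

section
/- Fix η₀ > 0. There exists a constant C₁ > 0, depending only on η₀, such that for every admissible quadruple (n,m,ν,μ) and all reals θ, φ one has |N_{n,m}^{ν,μ}(θ,φ)| ≤ C₁ · (n+m+1). (Linear growth bound for the normal derivatives of the interior toroidal harmonics.) -/
open Real MeasureTheory intervalIntegral Filter Topology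

/-!
Write `q_{n,m}` as an explicit nonzero prefactor times
`J_n = ∫_{-1}^{1} (1 - s²)^{n-1/2} (t - s)^{-(n+m+1/2)} ds`. Via `Γ(x + 1) = x Γ(x)`, the
ratio `q_{n+1,m} / q_{n,m}` becomes `(n + m + 1/2) J'_n / ((2n + 1) J_n)`, where `J'_n` carries
one more power of both factors. Integrating `d/ds [(1 - s²)^{n+1/2} (t - s)^{-(n+m+1/2)}]`
over `[-1, 1]` turns `(n + m + 1/2) J'_n` into
`(2n + 1) ∫ s (1 - s²)^{n-1/2} (t - s)^{-(n+m+1/2)} ds`, which is at most `(2n + 1) J_n`.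
Hence `|q_{n+1,m} / q_{n,m}| ≤ 1`, so every coefficient in the bracket of `N` is
`O((n + m + 1) cosh² η₀)`, while the trigonometric factors and `√(cosh η₀ - cos θ)` stay
bounded.
-/

open Set

section OneSubSqWeight

variable {p : ℝ} {f : ℝ → ℝ}

lemma intervalIntegrable_one_sub_sq_rpow_mul_zero_one (hp : -1 < p)
    (hf : ContinuousOn f (Icc 0 1)) :
    IntervalIntegrable (fun s => (1 - s ^ 2) ^ p * f s) volume 0 1 := by
  have hsing : IntervalIntegrable (fun s : ℝ => (1 - s) ^ p) volume 0 1 := by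
    simpa using ((intervalIntegrable_rpow' (a := 0) (b := 1) hp).comp_sub_left 1).symm
  have hreg : ContinuousOn (fun s : ℝ => (1 + s) ^ p * f s) (uIcc 0 1) := by
    rw [uIcc_of_le zero_le_one]
    refine (ContinuousOn.rpow_const (by fun_prop) fun x hx => Or.inl ?_).mul hf
    linarith [hx.1]
  refine (hsing.mul_continuousOn hreg).congr ?_
  intro s hs
  rw [uIoc_of_le zero_le_one] at hs
  simp only
  rw [← mul_assoc, ← mul_rpow (by linarith [hs.2]) (by linarith [hs.1])]
  ring_nf

lemma intervalIntegrable_one_sub_sq_rpow_mul (hp : -1 < p)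
    (hf : ContinuousOn f (Icc (-1) 1)) :
    IntervalIntegrable (fun s => (1 - s ^ 2) ^ p * f s) volume (-1) 1 := by
  have hneg : IntervalIntegrable (fun s => (1 - s ^ 2) ^ p * f s) volume (-1) 0 := by
    rw [IntervalIntegrable.iff_comp_neg]
    simpa using (intervalIntegrable_one_sub_sq_rpow_mul_zero_one hp
      (f := fun s => f (-s)) (hf.comp continuous_neg.continuousOn fun x hx =>
        ⟨by linarith [hx.2], by linarith [hx.1]⟩)).symm
  exact hneg.trans (intervalIntegrable_one_sub_sq_rpow_mul_zero_one hp
    (hf.mono (Icc_subset_Icc_left (by norm_num))))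

lemma integral_one_sub_sq_rpow_mul_pos (hp : -1 < p) (hf : ContinuousOn f (Icc (-1) 1))
    (hpos : ∀ s ∈ Ioo (-1 : ℝ) 1, 0 < f s) :
    0 < ∫ s in (-1 : ℝ)..1, (1 - s ^ 2) ^ p * f s := by
  refine intervalIntegral_pos_of_pos_on (intervalIntegrable_one_sub_sq_rpow_mul hp hf)
    (fun s hs => mul_pos (rpow_pos_of_pos ?_ _) (hpos s hs)) (by norm_num)
  nlinarith [hs.1, hs.2]

end OneSubSqWeight

section ToroidalIntegral

variable {t : ℝ}

lemma continuousOn_sub_rpow (ht : 1 < t) (q : ℝ) :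
    ContinuousOn (fun s => (t - s) ^ q) (Icc (-1) 1) :=
  ContinuousOn.rpow_const (by fun_prop) fun s hs => Or.inl (by linarith [hs.2])

/-- Integration by parts against `(1 - s²)^a (t - s)^(-b)`, which vanishes at `s = ±1`
since `a > 0`. -/
lemma mul_integral_one_sub_sq_rpow_mul_sub_rpow (ht : 1 < t) {a : ℝ} (ha : 0 < a) (b : ℝ) :
    b * ∫ s in (-1 : ℝ)..1, (1 - s ^ 2) ^ a * (t - s) ^ (-(b + 1)) =
      2 * a * ∫ s in (-1 : ℝ)..1, (1 - s ^ 2) ^ (a - 1) * (s * (t - s) ^ (-b)) := by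
  set F : ℝ → ℝ := fun s => (1 - s ^ 2) ^ a * (t - s) ^ (-b)
  set v : ℝ → ℝ := fun s => (1 - s ^ 2) ^ a * (t - s) ^ (-(b + 1))
  set w : ℝ → ℝ := fun s => (1 - s ^ 2) ^ (a - 1) * (s * (t - s) ^ (-b))
  have hv : IntervalIntegrable v volume (-1) 1 :=
    intervalIntegrable_one_sub_sq_rpow_mul (by linarith) (continuousOn_sub_rpow ht _)
  have hw : IntervalIntegrable w volume (-1) 1 :=
    intervalIntegrable_one_sub_sq_rpow_mul (by linarith)
      (continuousOn_id.mul (continuousOn_sub_rpow ht _))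
  have hderiv : ∀ s ∈ Ioo (-1 : ℝ) 1, HasDerivAt F (b * v s - 2 * a * w s) s := by
    intro s hs
    have h₁ : 0 < 1 - s ^ 2 := by nlinarith [hs.1, hs.2]
    have h₂ : 0 < t - s := by linarith [hs.2]
    refine ((((hasDerivAt_pow 2 s).const_sub 1).rpow_const (p := a) (Or.inl h₁.ne')).mul
      (((hasDerivAt_id s).const_sub t).rpow_const (p := -b) (Or.inl h₂.ne'))).congr_deriv ?_
    simp only [v, w, id, show -b - 1 = -(b + 1) by ring]
    push_cast
    ring
  have hF : ContinuousOn F (Icc (-1) 1) :=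
    (ContinuousOn.rpow_const (by fun_prop) fun _ _ => Or.inr ha.le).mul
      (continuousOn_sub_rpow ht _)
  have hboundary : F 1 - F (-1) = 0 := by
    simp [F, zero_rpow ha.ne']
  have hftc := integral_eq_sub_of_hasDeriv_right_of_le (by norm_num) hF
    (fun s hs => (hderiv s hs).hasDerivWithinAt) ((hv.const_mul b).sub (hw.const_mul (2 * a)))
  rw [hboundary, intervalIntegral.integral_sub (hv.const_mul b) (hw.const_mul _),
    intervalIntegral.integral_const_mul, intervalIntegral.integral_const_mul] at hftc
  exact sub_eq_zero.mp hftc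

lemma mul_integral_one_sub_sq_rpow_mul_sub_rpow_le (ht : 1 < t) {a : ℝ} (ha : 0 < a)
    (b : ℝ) :
    b * ∫ s in (-1 : ℝ)..1, (1 - s ^ 2) ^ a * (t - s) ^ (-(b + 1)) ≤
      2 * a * ∫ s in (-1 : ℝ)..1, (1 - s ^ 2) ^ (a - 1) * (t - s) ^ (-b) := by
  rw [mul_integral_one_sub_sq_rpow_mul_sub_rpow ht ha]
  refine mul_le_mul_of_nonneg_left (intervalIntegral.integral_mono_on (by norm_num)
    (intervalIntegrable_one_sub_sq_rpow_mul (by linarith)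
      (continuousOn_id.mul (continuousOn_sub_rpow ht _)))
    (intervalIntegrable_one_sub_sq_rpow_mul (by linarith) (continuousOn_sub_rpow ht _))
    fun s hs => ?_) (by positivity)
  have h₁ : 0 ≤ 1 - s ^ 2 := by nlinarith [hs.1, hs.2]
  have h₂ : 0 < t - s := by linarith [hs.2]
  gcongr
  exact mul_le_of_le_one_left (by positivity) hs.2

end ToroidalIntegral

noncomputable def legendreQFactor (n m : ℕ) (t : ℝ) : ℝ :=
  (-1 : ℝ) ^ m / 2 ^ ((n : ℝ) + 1 / 2) *
    (Gamma ((n : ℝ) + m + 1 / 2) / Gamma ((n : ℝ) + 1 / 2)) * (t ^ 2 - 1) ^ ((m : ℝ) / 2)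

section LegendreQ

variable {t : ℝ}

lemma legendreQFactor_ne_zero (ht : 1 < t) (n m : ℕ) : legendreQFactor n m t ≠ 0 := by
  have h : 0 < t ^ 2 - 1 := by nlinarith
  have := Gamma_pos_of_pos (show 0 < (n : ℝ) + m + 1 / 2 by positivity)
  have := Gamma_pos_of_pos (show 0 < (n : ℝ) + 1 / 2 by positivity)
  exact mul_ne_zero (mul_ne_zero (div_ne_zero (by simp) (by positivity)) (by positivity))
    (by positivity)

lemma Qh_eq_legendreQFactor_mul (n m : ℕ) (t : ℝ) :
    Qh n m t = legendreQFactor n m t * ∫ s in (-1 : ℝ)..1,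
      (1 - s ^ 2) ^ ((n : ℝ) + 1 / 2 - 1) * (t - s) ^ (-((n : ℝ) + m + 1 / 2)) := by
  rw [Qh, legendreQFactor]
  ring_nf

lemma Qh_succ_eq_legendreQFactor_mul (n m : ℕ) (t : ℝ) :
    Qh (n + 1) m t = legendreQFactor n m t *
      (((n : ℝ) + m + 1 / 2) / (2 * ((n : ℝ) + 1 / 2)) * ∫ s in (-1 : ℝ)..1,
        (1 - s ^ 2) ^ ((n : ℝ) + 1 / 2) * (t - s) ^ (-((n : ℝ) + m + 1 / 2 + 1))) := by
  have hA : 0 < (n : ℝ) + 1 / 2 := by positivity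
  have hB : 0 < (n : ℝ) + m + 1 / 2 := by positivity
  rw [Qh, legendreQFactor]
  push_cast
  rw [show (n : ℝ) + 1 + m + 1 / 2 = (n + m + 1 / 2) + 1 by ring,
    show (n : ℝ) + 1 + 1 / 2 = (n + 1 / 2) + 1 by ring, Gamma_add_one hB.ne',
    Gamma_add_one hA.ne',
    rpow_add two_pos, rpow_one, show (n : ℝ) + 1 - 1 / 2 = n + 1 / 2 by ring]
  field_simp

end LegendreQ

lemma abs_Qh_succ_div_le_one {t : ℝ} (ht : 1 < t) (n m : ℕ) :
    |Qh (n + 1) m t / Qh n m t| ≤ 1 := by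
  have hA : (0 : ℝ) < n + 1 / 2 := by positivity
  have hJ₁ : 0 < ∫ s in (-1 : ℝ)..1,
      (1 - s ^ 2) ^ ((n : ℝ) + 1 / 2 - 1) * (t - s) ^ (-((n : ℝ) + m + 1 / 2)) :=
    integral_one_sub_sq_rpow_mul_pos (by linarith) (continuousOn_sub_rpow ht _)
      fun s hs => rpow_pos_of_pos (by linarith [hs.2]) _
  have hJ₂ : 0 < ∫ s in (-1 : ℝ)..1,
      (1 - s ^ 2) ^ ((n : ℝ) + 1 / 2) * (t - s) ^ (-((n : ℝ) + m + 1 / 2 + 1)) :=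
    integral_one_sub_sq_rpow_mul_pos (by linarith) (continuousOn_sub_rpow ht _)
      fun s hs => rpow_pos_of_pos (by linarith [hs.2]) _
  rw [Qh_succ_eq_legendreQFactor_mul, Qh_eq_legendreQFactor_mul,
    mul_div_mul_left _ _ (legendreQFactor_ne_zero ht n m), abs_of_pos (by positivity),
    div_le_one hJ₁, div_mul_eq_mul_div, div_le_iff₀ (by positivity), mul_comm _ (2 * _)]
  exact mul_integral_one_sub_sq_rpow_mul_sub_rpow_le ht hA _

lemma abs_Phi_le_one (ν k : ℤ) (x : ℝ) : |Phi ν k x| ≤ 1 := by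
  unfold Phi
  split_ifs
  exacts [abs_cos_le_one _, abs_sin_le_one _]

section NeumannBracket

variable {n m t r : ℝ}

lemma abs_neumann_coeff_le (hn : 0 ≤ n) (hm : 0 ≤ m) (ht : 1 ≤ t) (hr : |r| ≤ 1) :
    |(1 + 2 * n) * t - (2 * (n - m) + 1) * r| ≤ 4 * t ^ 2 * (n + m + 1) := by
  obtain ⟨hr₁, hr₂⟩ := abs_le.mp hr
  rw [abs_le]
  constructor <;> nlinarith [mul_nonneg hn (sub_nonneg.mpr hr₂),
    mul_nonneg hm (sub_nonneg.mpr hr₂), mul_nonneg hn (neg_le_iff_add_nonneg.mp hr₁),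
    mul_nonneg hm (neg_le_iff_add_nonneg.mp hr₁),
    mul_nonneg (add_nonneg hn hm) (sub_nonneg.mpr ht)]

lemma abs_neumann_coeff_mid_le (hn : 0 ≤ n) (hm : 0 ≤ m) (ht : 1 ≤ t) (hr : |r| ≤ 1) :
    |(2 * n * t ^ 2 + 1) - (2 * (n - m) + 1) * t * r| ≤ 4 * t ^ 2 * (n + m + 1) := by
  obtain ⟨hr₁, hr₂⟩ := abs_le.mp hr
  have ht₀ : 0 ≤ t := by linarith
  have h₁ : 0 ≤ t * (1 - r) := mul_nonneg ht₀ (by linarith)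
  have h₂ : 0 ≤ t * (1 + r) := mul_nonneg ht₀ (by linarith)
  rw [abs_le]
  constructor <;> nlinarith [mul_nonneg hn h₁, mul_nonneg hm h₁, mul_nonneg hn h₂,
    mul_nonneg hm h₂, mul_nonneg (add_nonneg hn hm) (sub_nonneg.mpr ht),
    mul_nonneg (mul_nonneg (add_nonneg hn hm) ht₀) (sub_nonneg.mpr ht)]

lemma abs_neumann_bracket_le {u v w : ℝ} (hn : 0 ≤ n) (hm : 0 ≤ m) (ht : 1 ≤ t)
    (hr : |r| ≤ 1) (hu : |u| ≤ 1) (hv : |v| ≤ 1) (hw : |w| ≤ 1) :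
    |u * ((1 + 2 * n) * t - (2 * (n - m) + 1) * r) -
        2 * v * ((2 * n * t ^ 2 + 1) - (2 * (n - m) + 1) * t * r) +
        w * ((1 + 2 * n) * t - (2 * (n - m) + 1) * r)| ≤ 16 * t ^ 2 * (n + m + 1) := by
  set α := (1 + 2 * n) * t - (2 * (n - m) + 1) * r
  set β := (2 * n * t ^ 2 + 1) - (2 * (n - m) + 1) * t * r
  have hα : |α| ≤ 4 * t ^ 2 * (n + m + 1) := abs_neumann_coeff_le hn hm ht hr
  have hβ : |β| ≤ 4 * t ^ 2 * (n + m + 1) := abs_neumann_coeff_mid_le hn hm ht hr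
  calc |u * α - 2 * v * β + w * α| ≤ |u * α| + |2 * v * β| + |w * α| :=
        (abs_add_le _ _).trans (add_le_add_left (abs_sub _ _) _)
    _ = |u| * |α| + 2 * |v| * |β| + |w| * |α| := by simp only [abs_mul, abs_two]
    _ ≤ 1 * |α| + 2 * 1 * |β| + 1 * |α| := by gcongr
    _ ≤ 16 * t ^ 2 * (n + m + 1) := by linarith

end NeumannBracket

/-- linear growth bound for the normal derivatives of the interior
toroidal harmonics. -/
theorem normal_derivative_linear_bound (η₀ : ℝ) (hη₀ : 0 < η₀) :
    ∃ C₁ > (0 : ℝ), ∀ (n m : ℕ) (ν μ : ℤ), Admissible n m ν μ → ∀ θ φ : ℝ,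
      |NDer η₀ n m ν μ θ φ| ≤ C₁ * ((n : ℝ) + (m : ℝ) + 1) := by
  have hs : 0 < sinh η₀ := sinh_pos_iff.mpr hη₀
  refine ⟨4 * cosh η₀ ^ 2 * √(cosh η₀ + 1) / sinh η₀, by positivity, ?_⟩
  rintro n m ν μ - θ φ
  have hbracket := abs_neumann_bracket_le n.cast_nonneg m.cast_nonneg (one_le_cosh η₀)
    (abs_Qh_succ_div_le_one (one_lt_cosh.mpr hη₀.ne') n m) (abs_Phi_le_one ν (n - 1) θ)
    (abs_Phi_le_one ν n θ) (abs_Phi_le_one ν (n + 1) θ)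
  have hsqrt : √(cosh η₀ - cos θ) ≤ √(cosh η₀ + 1) :=
    sqrt_le_sqrt (by linarith [neg_one_le_cos θ])
  rw [NDer, abs_mul, abs_mul, abs_div, abs_of_nonneg (sqrt_nonneg _), abs_of_pos (by positivity)]
  simp only [mul_div_assoc]
  calc √(cosh η₀ - cos θ) / (4 * sinh η₀) * |Phi μ m φ| * |_|
      ≤ √(cosh η₀ + 1) / (4 * sinh η₀) * 1 * (16 * cosh η₀ ^ 2 * (n + m + 1)) := by
        gcongr
        exacts [abs_Phi_le_one μ m φ, hbracket]
    _ = _ := by field_simp; ring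
end

section
/- For every η₀ > 0 and all integers n ≥ 0, m ≥ 0, the toroidal Neumann constant τ_{n,m}(η₀) is nonzero. -/
open Real MeasureTheory intervalIntegral Filter Topology

lemma myCont {t : ℝ} (ht : 1 < t) {a : ℝ} (ha : 0 < a) (b : ℝ) :
    ContinuousOn (fun s : ℝ => (1 - s ^ 2) ^ a * (t - s) ^ (-b)) (Set.Icc (-1) 1) := by
  apply ContinuousOn.mul
  · exact (Continuous.rpow_const (by continuity) (fun x => Or.inr ha.le)).continuousOn
  · apply ContinuousOn.rpow_const ((continuous_const.sub continuous_id).continuousOn)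
    intro s hs
    simp only [Set.mem_Icc] at hs
    left
    have : t - s ≠ 0 := by nlinarith [hs.2]
    simpa using this

lemma myInt {t : ℝ} (ht : 1 < t) {a : ℝ} (ha : 0 < a) (b : ℝ) :
    IntervalIntegrable (fun s : ℝ => (1 - s ^ 2) ^ a * (t - s) ^ (-b)) volume (-1) 1 := by
  apply ContinuousOn.intervalIntegrable
  rw [Set.uIcc_of_le (by norm_num)]
  exact myCont ht ha b

lemma myPos {t : ℝ} (ht : 1 < t) {a : ℝ} (ha : 0 < a) (b : ℝ) :
    0 < ∫ s in (-1:ℝ)..1, (1 - s ^ 2) ^ a * (t - s) ^ (-b) := by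
  apply intervalIntegral.intervalIntegral_pos_of_pos_on (myInt ht ha b) _ (by norm_num)
  intro s hs
  simp only [Set.mem_Ioo] at hs
  have h1 : 0 < 1 - s ^ 2 := by nlinarith [hs.1, hs.2]
  have h2 : 0 < t - s := by nlinarith [hs.2]
  exact mul_pos (Real.rpow_pos_of_pos h1 a) (Real.rpow_pos_of_pos h2 _)

lemma myMono {t w : ℝ} (ht : 1 < t) {a b : ℝ} (ha : 0 < a)
    (hw2 : w ^ 2 = t ^ 2 - 1) (hwt : w < t) :
    (∫ s in (-1:ℝ)..1, (1 - s ^ 2) ^ (a + 1) * (t - s) ^ (-(b + 1))) ≤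
      2 * (t - w) * ∫ s in (-1:ℝ)..1, (1 - s ^ 2) ^ a * (t - s) ^ (-b) := by
  rw [← intervalIntegral.integral_const_mul]
  apply intervalIntegral.integral_mono_on (by norm_num)
    (myInt ht (by linarith) (b + 1)) ((myInt ht ha b).const_mul _)
  intro s hs
  simp only [Set.mem_Icc] at hs
  have hts : 0 < t - s := by nlinarith [hs.2]
  have htw : 0 < t - w := by linarith
  by_cases h0 : 1 - s ^ 2 = 0
  · rw [h0, Real.zero_rpow (by positivity), Real.zero_rpow ha.ne', ]
    simp
  · have h1 : 0 < 1 - s ^ 2 := lt_of_le_of_ne (by nlinarith [hs.1, hs.2]) (Ne.symm h0)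
    have key : (1 - s ^ 2) * (t - s)⁻¹ ≤ 2 * (t - w) := by
      rw [mul_inv_le_iff₀ hts]
      nlinarith [sq_nonneg (s - (t - w))]
    have e1 : (1 - s ^ 2) ^ (a + 1) = (1 - s ^ 2) ^ a * (1 - s ^ 2) :=
      Real.rpow_add_one h0 a
    have e2 : (t - s) ^ (-(b + 1)) = (t - s) ^ (-b) * (t - s)⁻¹ := by
      rw [show -(b+1) = -b + (-1) by ring, Real.rpow_add hts, Real.rpow_neg_one]
    rw [e1, e2]
    have hP : 0 < (1 - s ^ 2) ^ a * (t - s) ^ (-b) :=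
      mul_pos (Real.rpow_pos_of_pos h1 a) (Real.rpow_pos_of_pos hts _)
    calc (1 - s ^ 2) ^ a * (1 - s ^ 2) * ((t - s) ^ (-b) * (t - s)⁻¹)
        = ((1 - s ^ 2) ^ a * (t - s) ^ (-b)) * ((1 - s ^ 2) * (t - s)⁻¹) := by ring
      _ ≤ ((1 - s ^ 2) ^ a * (t - s) ^ (-b)) * (2 * (t - w)) :=
          mul_le_mul_of_nonneg_left key hP.le
      _ = 2 * (t - w) * ((1 - s ^ 2) ^ a * (t - s) ^ (-b)) := by ring


set_option maxHeartbeats 1600000 in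
/-- the toroidal Neumann constants `τ_{n,m}` never vanish. -/
theorem tau_ne_zero (η₀ : ℝ) (hη₀ : 0 < η₀) (n m : ℕ) : tauT η₀ n m ≠ 0 := by
  have hw0 : 0 < Real.sinh η₀ := Real.sinh_pos_iff.mpr hη₀
  set t := Real.cosh η₀ with htdef
  set w := Real.sinh η₀ with hwdef
  have hw2 : w ^ 2 = t ^ 2 - 1 := by
    have h := Real.cosh_sq_sub_sinh_sq η₀
    rw [← htdef, ← hwdef] at h
    linarith
  have ht : 1 < t := by nlinarith [Real.cosh_pos (x := η₀), hw0]
  have hwt : w < t := by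
    have h := Real.cosh_sub_sinh η₀
    rw [← htdef, ← hwdef] at h
    have := Real.exp_pos (-η₀)
    linarith
  have htw : 0 < t - w := by linarith
  obtain ⟨J1, hJ1def⟩ : ∃ x : ℝ, x = ∫ s in (-1:ℝ)..1,
      (1 - s ^ 2) ^ ((n:ℝ) + 1/2) * (t - s) ^ (-((n:ℝ) + (m:ℝ) + 3/2)) := ⟨_, rfl⟩
  obtain ⟨J2, hJ2def⟩ : ∃ x : ℝ, x = ∫ s in (-1:ℝ)..1,
      (1 - s ^ 2) ^ ((n:ℝ) + 1/2 + 1) * (t - s) ^ (-((n:ℝ) + (m:ℝ) + 3/2 + 1)) := ⟨_, rfl⟩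
  have hJ1 : 0 < J1 := hJ1def ▸ myPos ht (by positivity) _
  have hJ2 : 0 < J2 := hJ2def ▸ myPos ht (by positivity) _
  have hmono : J2 ≤ 2 * (t - w) * J1 := by
    rw [hJ1def, hJ2def]; exact myMono ht (by positivity) hw2 hwt
  have hP : 0 < (t ^ 2 - 1) ^ ((m:ℝ)/2) := Real.rpow_pos_of_pos (by nlinarith) _
  have hGx : 0 < Real.Gamma ((n:ℝ) + 1 + 1/2) := Real.Gamma_pos_of_pos (by positivity)
  have hGy : 0 < Real.Gamma ((n:ℝ) + 1 + (m:ℝ) + 1/2) := Real.Gamma_pos_of_pos (by positivity)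
  have hS : ((-1:ℝ) ^ m) ≠ 0 := pow_ne_zero _ (by norm_num)
  have hq1 : qh η₀ (n+1) m = ((-1:ℝ) ^ m * (t ^ 2 - 1) ^ ((m:ℝ)/2)) *
      ((Real.Gamma ((n:ℝ) + 1 + (m:ℝ) + 1/2) /
        ((2:ℝ) ^ ((n:ℝ) + 1 + 1/2) * Real.Gamma ((n:ℝ) + 1 + 1/2))) * J1) := by
    simp only [qh, Qh, ← htdef]
    simp only [show ((n+1:ℕ):ℝ) = (n:ℝ) + 1 from by push_cast; ring]
    rw [show (n:ℝ) + 1 - 1/2 = (n:ℝ) + 1/2 from by ring,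
       show -((n:ℝ) + 1 + (m:ℝ) + 1/2) = -((n:ℝ) + (m:ℝ) + 3/2) from by ring, ← hJ1def]
    ring
  have hq2 : qh η₀ (n+2) m = ((-1:ℝ) ^ m * (t ^ 2 - 1) ^ ((m:ℝ)/2)) *
      ((Real.Gamma ((n:ℝ) + 2 + (m:ℝ) + 1/2) /
        ((2:ℝ) ^ ((n:ℝ) + 2 + 1/2) * Real.Gamma ((n:ℝ) + 2 + 1/2))) * J2) := by
    simp only [qh, Qh, ← htdef]
    simp only [show ((n+2:ℕ):ℝ) = (n:ℝ) + 2 from by push_cast; ring]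
    rw [show (n:ℝ) + 2 - 1/2 = (n:ℝ) + 1/2 + 1 from by ring,
       show -((n:ℝ) + 2 + (m:ℝ) + 1/2) = -((n:ℝ) + (m:ℝ) + 3/2 + 1) from by ring, ← hJ2def]
    ring
  have hGrec1 : Real.Gamma ((n:ℝ) + 2 + 1/2) = ((n:ℝ) + 1 + 1/2) * Real.Gamma ((n:ℝ) + 1 + 1/2) := by
    rw [show (n:ℝ) + 2 + 1/2 = ((n:ℝ) + 1 + 1/2) + 1 from by ring,
       Real.Gamma_add_one (by positivity)]
  have hGrec2 : Real.Gamma ((n:ℝ) + 2 + (m:ℝ) + 1/2)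
      = ((n:ℝ) + 1 + (m:ℝ) + 1/2) * Real.Gamma ((n:ℝ) + 1 + (m:ℝ) + 1/2) := by
    rw [show (n:ℝ) + 2 + (m:ℝ) + 1/2 = ((n:ℝ) + 1 + (m:ℝ) + 1/2) + 1 from by ring,
       Real.Gamma_add_one (by positivity)]
  have h2p : (2:ℝ) ^ ((n:ℝ) + 2 + 1/2) = 2 * (2:ℝ) ^ ((n:ℝ) + 1 + 1/2) := by
    rw [show (n:ℝ) + 2 + 1/2 = ((n:ℝ) + 1 + 1/2) + 1 from by ring,
       Real.rpow_add_one two_ne_zero]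
    ring
  have h2pos : (0:ℝ) < (2:ℝ) ^ ((n:ℝ) + 1 + 1/2) := Real.rpow_pos_of_pos (by norm_num) _
  have hratio : qh η₀ (n+2) m / qh η₀ (n+1) m
      = (((n:ℝ) + 1 + (m:ℝ) + 1/2) * J2) / ((2 * ((n:ℝ) + 1 + 1/2)) * J1) := by
    rw [hq1, hq2, hGrec1, hGrec2, h2p]
    rw [div_eq_div_iff (by
        apply mul_ne_zero (mul_ne_zero hS hP.ne')
        exact mul_ne_zero (div_ne_zero hGy.ne' (mul_ne_zero h2pos.ne' hGx.ne')) hJ1.ne')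
      (by positivity)]
    field_simp
  obtain ⟨R, hRdef⟩ : ∃ x : ℝ, x = qh η₀ (n+2) m / qh η₀ (n+1) m := ⟨_, rfl⟩
  have hRval : R = (((n:ℝ) + 1 + (m:ℝ) + 1/2) * J2) / ((2 * ((n:ℝ) + 1 + 1/2)) * J1) :=
    hRdef.trans hratio
  have hRpos : 0 < R := by
    rw [hRval]
    exact div_pos (mul_pos (by positivity) hJ2) (mul_pos (by positivity) hJ1)
  have hRle : R ≤ (((n:ℝ) + 1 + (m:ℝ) + 1/2) * (2 * (t - w))) / (2 * ((n:ℝ) + 1 + 1/2)) := by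
    rw [hRval, div_le_div_iff₀ (mul_pos (by positivity) hJ1) (by positivity)]
    nlinarith [mul_le_mul_of_nonneg_left
      (mul_le_mul_of_nonneg_left hmono (by positivity : (0:ℝ) ≤ (n:ℝ) + 1 + (m:ℝ) + 1/2))
      (by positivity : (0:ℝ) ≤ 2 * ((n:ℝ) + 1 + 1/2))]
  have hX : 0 < (2 * (n:ℝ) + 3) * t + (2 * ((m:ℝ) - (n:ℝ)) - 3) * R := by
    rcases le_or_gt 0 (2 * ((m:ℝ) - (n:ℝ)) - 3) with hC | hC
    · have h1 : 0 < (2 * (n:ℝ) + 3) * t := by positivity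
      nlinarith [mul_nonneg hC hRpos.le]
    · have h1 := mul_le_mul_of_nonpos_left hRle hC.le
      have hBne : (2 * ((n:ℝ) + 1 + 1/2)) ≠ 0 := by positivity
      have h2 : (2 * ((m:ℝ) - (n:ℝ)) - 3) *
          ((((n:ℝ) + 1 + (m:ℝ) + 1/2) * (2 * (t - w))) / (2 * ((n:ℝ) + 1 + 1/2)))
          = (4 * (m:ℝ) ^ 2 - (2 * (n:ℝ) + 3) ^ 2) * (t - w) / (2 * (n:ℝ) + 3) := by
        field_simp
        ring
      rw [h2] at h1
      have h3 : (4 * (m:ℝ) ^ 2 - (2 * (n:ℝ) + 3) ^ 2) * (t - w) / (2 * (n:ℝ) + 3)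
          ≥ -((2 * (n:ℝ) + 3) * (t - w)) := by
        rw [ge_iff_le, le_div_iff₀ (by positivity : (0:ℝ) < 2 * (n:ℝ) + 3)]
        nlinarith [mul_nonneg (mul_nonneg (by norm_num : (0:ℝ) ≤ 4) (sq_nonneg (m:ℝ))) htw.le]
      nlinarith [hw0, h1, h3]
  have htau : tauT η₀ n m = (1 / (4 * w)) *
      ((2 * (n:ℝ) + 3) * t + (2 * ((m:ℝ) - (n:ℝ)) - 3) * R) := by
    rw [tauT, ← htdef, ← hwdef, hRdef, mul_div_assoc]
  rw [htau]
  exact (mul_pos (by positivity) hX).ne'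
end

section
/- For every η₀ > 0, the toroidal Neumann constants at m = 0 satisfy the three identities: (i) σ_{0,0} q_{0,0} + 2 τ_{0,0} q_{1,0} = 0; (ii) ρ_{1,0} q_{0,0} + 2 ( σ_{1,0} q_{1,0} + τ_{1,0} q_{2,0} ) = 0; (iii) ρ_{n,0} q_{n−1,0} + σ_{n,0} q_{n,0} + τ_{n,0} q_{n+1,0} = 0 for every n ≥ 2. -/
open Real MeasureTheory intervalIntegral Filter Topology

/-!
For `m = 0` the integral defining `Q_{n-1/2}` becomes, after `s = cos ψ`, the smooth integral
`2^{-(n+1/2)} ∫₀^π sin^{2n} ψ (t - cos ψ)^{-(n+1/2)} dψ`. Integrating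
`d/dψ [sin^{k+1} ψ (t - cos ψ)^r]` over `[0, π]` and using `sin² ψ = 1 - cos² ψ` relates these
integrals for neighbouring `k` and `r`, which yields the three-term recurrence
`(2n+3) q_{n+2} - 4(n+1) t q_{n+1} + (2n+1) q_n = 0` of the Legendre functions. Each identity
for the Neumann constants is this recurrence divided by the (positive) `q`'s.
-/

section SinPowIntegral

variable {t : ℝ}

noncomputable def sinPowSubCosIntegral (t : ℝ) (k : ℕ) (r : ℝ) : ℝ :=
  ∫ ψ in (0 : ℝ)..π, sin ψ ^ k * (t - cos ψ) ^ r

lemma sub_cos_pos (ht : 1 < t) (ψ : ℝ) : 0 < t - cos ψ := by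
  linarith [cos_le_one ψ]

lemma continuous_sin_pow_mul_sub_cos_rpow (ht : 1 < t) (k : ℕ) (r : ℝ) :
    Continuous fun ψ => sin ψ ^ k * (t - cos ψ) ^ r :=
  (continuous_sin.pow k).mul <|
    (continuous_const.sub continuous_cos).rpow_const fun ψ => .inl (sub_cos_pos ht ψ).ne'

lemma intervalIntegrable_sin_pow_mul_sub_cos_rpow (ht : 1 < t) (k : ℕ) (r : ℝ) :
    IntervalIntegrable (fun ψ => sin ψ ^ k * (t - cos ψ) ^ r) volume 0 π :=
  (continuous_sin_pow_mul_sub_cos_rpow ht k r).intervalIntegrable _ _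

lemma sinPowSubCosIntegral_pos (ht : 1 < t) (k : ℕ) (r : ℝ) :
    0 < sinPowSubCosIntegral t k r :=
  intervalIntegral_pos_of_pos_on (intervalIntegrable_sin_pow_mul_sub_cos_rpow ht k r)
    (fun ψ hψ => mul_pos (pow_pos (sin_pos_of_pos_of_lt_pi hψ.1 hψ.2) k)
      (rpow_pos_of_pos (sub_cos_pos ht ψ) r)) pi_pos

lemma hasDerivAt_sin_pow_succ_mul_sub_cos_rpow (ht : 1 < t) (k : ℕ) (r ψ : ℝ) :
    HasDerivAt (fun ψ => sin ψ ^ (k + 1) * (t - cos ψ) ^ r)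
      ((k + 1) * (cos ψ * (sin ψ ^ k * (t - cos ψ) ^ r)) +
        r * (sin ψ ^ (k + 2) * (t - cos ψ) ^ (r - 1))) ψ := by
  have hsin : HasDerivAt (fun ψ => sin ψ ^ (k + 1)) ((k + 1 : ℕ) * sin ψ ^ k * cos ψ) ψ := by
    simpa using (hasDerivAt_sin ψ).fun_pow (k + 1)
  have hsub : HasDerivAt (fun ψ => t - cos ψ) (sin ψ) ψ := by
    simpa using (hasDerivAt_cos ψ).const_sub t
  refine (hsin.fun_mul (hsub.rpow_const (p := r) (.inl (sub_cos_pos ht ψ).ne'))).congr_deriv ?_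
  push_cast
  ring

-- Integration by parts: the boundary term `sin^{k+1} ψ (t - cos ψ)^r` vanishes at `0` and `π`.
lemma sinPowSubCosIntegral_ibp (ht : 1 < t) (k : ℕ) (r : ℝ) :
    (k + 1) * (t * sinPowSubCosIntegral t k r - sinPowSubCosIntegral t k (r + 1)) +
      r * sinPowSubCosIntegral t (k + 2) (r - 1) = 0 := by
  have hint := intervalIntegrable_sin_pow_mul_sub_cos_rpow ht
  have hftc := integral_eq_sub_of_hasDerivAt (a := 0) (b := π)
    (fun ψ _ => hasDerivAt_sin_pow_succ_mul_sub_cos_rpow ht k r ψ)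
    ((((continuous_cos.mul (continuous_sin_pow_mul_sub_cos_rpow ht k r)).const_mul _).add
      ((continuous_sin_pow_mul_sub_cos_rpow ht (k + 2) (r - 1)).const_mul _)).intervalIntegrable
        _ _)
  have hcos : ∀ ψ, cos ψ * (sin ψ ^ k * (t - cos ψ) ^ r) =
      t * (sin ψ ^ k * (t - cos ψ) ^ r) - sin ψ ^ k * (t - cos ψ) ^ (r + 1) := fun ψ => by
    rw [rpow_add_one (sub_cos_pos ht ψ).ne']
    ring
  simp only [hcos, sin_pi, sin_zero, zero_pow (Nat.succ_ne_zero k), zero_mul, sub_zero] at hftc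
  rw [integral_add ((((hint k r).const_mul t).sub (hint k (r + 1))).const_mul _)
      ((hint (k + 2) (r - 1)).const_mul _), intervalIntegral.integral_const_mul,
    intervalIntegral.integral_const_mul, integral_sub ((hint k r).const_mul t) (hint k (r + 1)),
    intervalIntegral.integral_const_mul] at hftc
  exact hftc

lemma sinPowSubCosIntegral_add_two (ht : 1 < t) (k : ℕ) (r : ℝ) :
    sinPowSubCosIntegral t (k + 2) r =
      (1 - t ^ 2) * sinPowSubCosIntegral t k r + 2 * t * sinPowSubCosIntegral t k (r + 1) -
        sinPowSubCosIntegral t k (r + 2) := by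
  have hint := intervalIntegrable_sin_pow_mul_sub_cos_rpow ht
  have hsin : ∀ ψ, sin ψ ^ (k + 2) * (t - cos ψ) ^ r =
      (1 - t ^ 2) * (sin ψ ^ k * (t - cos ψ) ^ r) +
        2 * t * (sin ψ ^ k * (t - cos ψ) ^ (r + 1)) - sin ψ ^ k * (t - cos ψ) ^ (r + 2) :=
      fun ψ => by
    have hpos := sub_cos_pos ht ψ
    rw [rpow_add_one hpos.ne', rpow_add hpos, rpow_two, pow_add, sin_sq]
    ring
  simp only [sinPowSubCosIntegral, hsin]
  rw [integral_sub (((hint k r).const_mul _).add ((hint k (r + 1)).const_mul _)) (hint k (r + 2)),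
    integral_add ((hint k r).const_mul _) ((hint k (r + 1)).const_mul _),
    intervalIntegral.integral_const_mul, intervalIntegral.integral_const_mul]

lemma sinPowSubCosIntegral_add_two_mul_eq (ht : 1 < t) (k : ℕ) (r : ℝ) :
    (k + r + 2) * sinPowSubCosIntegral t (k + 2) r =
      (k + 1) * sinPowSubCosIntegral t k r + r * t * sinPowSubCosIntegral t (k + 2) (r - 1) := by
  have h₁ := sinPowSubCosIntegral_ibp ht k r
  have h₂ := sinPowSubCosIntegral_ibp ht k (r + 1)
  rw [add_sub_cancel_right, add_assoc, one_add_one_eq_two] at h₂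
  linear_combination (k + 1) * sinPowSubCosIntegral_add_two ht k r - t * h₁ + h₂

lemma sinPowSubCosIntegral_recurrence (ht : 1 < t) (k : ℕ) (r : ℝ) :
    (k + r + 2) * (r - 1) * sinPowSubCosIntegral t (k + 4) (r - 2) +
      (k + 2) * (k + 3) * t * sinPowSubCosIntegral t (k + 2) (r - 1) =
      (k + 1) * (k + 3) * sinPowSubCosIntegral t k r := by
  have h := sinPowSubCosIntegral_ibp ht (k + 2) (r - 1)
  rw [sub_add_cancel, show r - 1 - 1 = r - 2 by ring] at h
  push_cast at h
  linear_combination (k + r + 2) * h + (k + 3) * sinPowSubCosIntegral_add_two_mul_eq ht k r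

end SinPowIntegral

/-- The change of variables theorem used here needs no continuity: for `n = 0` the left
integrand is unbounded near `±1`. -/
lemma integral_one_sub_sq_rpow_mul_eq_integral_sin_pow_mul (n : ℕ) (f : ℝ → ℝ) :
    ∫ s in (-1 : ℝ)..1, (1 - s ^ 2) ^ ((n : ℝ) - 1 / 2) * f s =
      ∫ ψ in (0 : ℝ)..π, sin ψ ^ (2 * n) * f (cos ψ) := by
  have hsubst := integral_image_eq_integral_abs_deriv_smul measurableSet_Icc
    (fun ψ _ => (hasDerivAt_cos ψ).hasDerivWithinAt) injOn_cos
    (fun s => (1 - s ^ 2) ^ ((n : ℝ) - 1 / 2) * f s)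
  rw [bijOn_cos.image_eq] at hsubst
  rw [integral_of_le (by norm_num), integral_of_le pi_pos.le, ← integral_Icc_eq_integral_Ioc,
    ← integral_Icc_eq_integral_Ioc, hsubst, integral_Icc_eq_integral_Ioo,
    integral_Icc_eq_integral_Ioo]
  refine setIntegral_congr_fun measurableSet_Ioo fun ψ hψ => ?_
  have hsin : 0 < sin ψ := sin_pos_of_pos_of_lt_pi hψ.1 hψ.2
  have hpow : sin ψ * (sin ψ ^ 2) ^ ((n : ℝ) - 1 / 2) = sin ψ ^ (2 * n) := by
    rw [← rpow_natCast, ← rpow_natCast, ← rpow_mul hsin.le, mul_comm,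
      ← rpow_add_one hsin.ne']
    norm_num
    ring_nf
  simp only [smul_eq_mul, abs_neg, abs_of_pos hsin, ← sin_sq, ← hpow]
  ring

lemma Qh_zero_eq_sinPowSubCosIntegral (n : ℕ) (t : ℝ) :
    Qh n 0 t = 2 ^ (-((n : ℝ) + 1 / 2)) * sinPowSubCosIntegral t (2 * n) (-(n + 1 / 2)) := by
  have hΓ : Gamma ((n : ℝ) + 1 / 2) ≠ 0 := (Gamma_pos_of_pos (by positivity)).ne'
  simp only [Qh, sinPowSubCosIntegral, Nat.cast_zero, add_zero, pow_zero, zero_div, rpow_zero,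
    div_self hΓ, mul_one, integral_one_sub_sq_rpow_mul_eq_integral_sin_pow_mul n,
    rpow_neg zero_le_two]
  ring

lemma Qh_zero_pos {t : ℝ} (ht : 1 < t) (n : ℕ) : 0 < Qh n 0 t := by
  rw [Qh_zero_eq_sinPowSubCosIntegral]
  exact mul_pos (rpow_pos_of_pos two_pos _) (sinPowSubCosIntegral_pos ht _ _)

lemma Qh_zero_recurrence {t : ℝ} (ht : 1 < t) (n : ℕ) :
    (2 * n + 3) * Qh (n + 2) 0 t - 4 * (n + 1) * t * Qh (n + 1) 0 t + (2 * n + 1) * Qh n 0 t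
      = 0 := by
  have hpow (j : ℕ) :
      (2 : ℝ) ^ (-(((n + j : ℕ) : ℝ) + 1 / 2)) = 2 ^ (-((n : ℝ) + 1 / 2)) / 2 ^ j := by
    rw [eq_div_iff (by positivity), ← rpow_natCast, ← rpow_add two_pos]
    congr 1
    push_cast
    ring
  have h := sinPowSubCosIntegral_recurrence ht (2 * n) (-(n + 1 / 2))
  rw [show 2 * n + 4 = 2 * (n + 2) by ring, show 2 * n + 2 = 2 * (n + 1) by ring,
    show -((n : ℝ) + 1 / 2) - 2 = -((n + 2 : ℕ) + 1 / 2) by push_cast; ring,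
    show -((n : ℝ) + 1 / 2) - 1 = -((n + 1 : ℕ) + 1 / 2) by push_cast; ring] at h
  rw [Qh_zero_eq_sinPowSubCosIntegral, Qh_zero_eq_sinPowSubCosIntegral,
    Qh_zero_eq_sinPowSubCosIntegral, hpow 2, hpow 1]
  refine mul_left_cancel₀ (by positivity : (2 * n + 3 : ℝ) ≠ 0) ?_
  push_cast at h ⊢
  linear_combination -2 ^ (-((n : ℝ) + 1 / 2)) * h

section NeumannConstants

variable {η₀ : ℝ}

lemma qh_zero_pos (hη₀ : 0 < η₀) (n : ℕ) : 0 < qh η₀ n 0 :=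
  Qh_zero_pos (one_lt_cosh.2 hη₀.ne') n

lemma qh_zero_recurrence (hη₀ : 0 < η₀) (n : ℕ) :
    (2 * n + 3) * qh η₀ (n + 2) 0 - 4 * (n + 1) * cosh η₀ * qh η₀ (n + 1) 0 +
      (2 * n + 1) * qh η₀ n 0 = 0 :=
  Qh_zero_recurrence (one_lt_cosh.2 hη₀.ne') n

lemma sigmaT_zero_mul_add_two_mul_tauT_zero (hη₀ : 0 < η₀) :
    sigmaT η₀ 0 0 * qh η₀ 0 0 + 2 * tauT η₀ 0 0 * qh η₀ 1 0 = 0 := by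
  have hsinh := (sinh_pos_iff.2 hη₀).ne'
  have hq₀ := (qh_zero_pos hη₀ 0).ne'
  have hq₁ := (qh_zero_pos hη₀ 1).ne'
  have hrec := qh_zero_recurrence hη₀ 0
  simp only [sigmaT, tauT]
  field_simp
  push_cast at hrec ⊢
  linear_combination -4 * hrec

lemma rhoT_one_mul_add_two_mul (hη₀ : 0 < η₀) :
    rhoT η₀ 1 0 * qh η₀ 0 0 + 2 * (sigmaT η₀ 1 0 * qh η₀ 1 0 + tauT η₀ 1 0 * qh η₀ 2 0) =
      0 := by
  have hsinh := (sinh_pos_iff.2 hη₀).ne'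
  have hq₀ := (qh_zero_pos hη₀ 0).ne'
  have hq₁ := (qh_zero_pos hη₀ 1).ne'
  have hq₂ := (qh_zero_pos hη₀ 2).ne'
  have hrec₀ := qh_zero_recurrence hη₀ 0
  have hrec₁ := qh_zero_recurrence hη₀ 1
  simp only [rhoT, sigmaT, tauT, if_pos]
  field_simp
  push_cast at hrec₀ hrec₁ ⊢
  linear_combination 4 * cosh η₀ * hrec₀ - 4 * hrec₁

lemma rhoT_mul_add_sigmaT_mul_add_tauT_mul (hη₀ : 0 < η₀) (n : ℕ) :
    rhoT η₀ (n + 2) 0 * qh η₀ (n + 1) 0 + sigmaT η₀ (n + 2) 0 * qh η₀ (n + 2) 0 +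
      tauT η₀ (n + 2) 0 * qh η₀ (n + 3) 0 = 0 := by
  have hsinh := (sinh_pos_iff.2 hη₀).ne'
  have hq₁ := (qh_zero_pos hη₀ (n + 1)).ne'
  have hq₂ := (qh_zero_pos hη₀ (n + 2)).ne'
  have hq₃ := (qh_zero_pos hη₀ (n + 3)).ne'
  have hrec₁ := qh_zero_recurrence hη₀ (n + 1)
  have hrec₂ := qh_zero_recurrence hη₀ (n + 2)
  simp only [rhoT, sigmaT, tauT, if_neg (by omega : n + 2 ≠ 1), show n + 2 - 1 = n + 1 by omega]
  field_simp
  push_cast at hrec₁ hrec₂ ⊢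
  linear_combination 2 * cosh η₀ * hrec₁ - 2 * hrec₂

end NeumannConstants

/-- special relations among the toroidal Neumann constants at `m = 0`. -/
theorem neumann_constants_relations (η₀ : ℝ) (hη₀ : 0 < η₀) :
    sigmaT η₀ 0 0 * qh η₀ 0 0 + 2 * tauT η₀ 0 0 * qh η₀ 1 0 = 0 ∧
    rhoT η₀ 1 0 * qh η₀ 0 0 +
      2 * (sigmaT η₀ 1 0 * qh η₀ 1 0 + tauT η₀ 1 0 * qh η₀ 2 0) = 0 ∧
    ∀ n : ℕ, 2 ≤ n →
      rhoT η₀ n 0 * qh η₀ (n - 1) 0 + sigmaT η₀ n 0 * qh η₀ n 0 +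
        tauT η₀ n 0 * qh η₀ (n + 1) 0 = 0 := by
  refine ⟨sigmaT_zero_mul_add_two_mul_tauT_zero hη₀, rhoT_one_mul_add_two_mul hη₀, ?_⟩
  intro n hn
  obtain ⟨k, rfl⟩ := Nat.exists_eq_add_of_le' hn
  exact rhoT_mul_add_sigmaT_mul_add_tauT_mul hη₀ k
end
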